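/- arXiv:cs/0603040 — 13 statements merged into one kernel-verified Lean document; each statement's English description precedes it below -/
import Mathlib

section
/- Let P > 0 and κ ≥ 0, and let F be a probability measure on [0,∞) such that λ ↦ ln(1+Pλ) is F-integrable. Set Ω* = {λ ∈ [0,∞) : λ ≥ κ}. Then for every measurable set Ω ⊆ [0,∞) with F(Ω) = F(Ω*), one has ∫_{Ω*} ln(1+Pλ) dF(λ) ≥ ∫_{Ω} ln(1+Pλ) dF(λ). (Single-antenna case of the optimality of threshold power on/off strategies, Theorem 1.) -/
open MeasureTheory

/-!
Bathtub argument. Write `Ω* = Ici κ`. Both regions share `Ω ∩ Ω*`, and the equal-power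
constraint forces the pieces `Ω \ Ω*` and `Ω* \ Ω` to have equal mass. Since the rate
`ln (1 + P λ)` is increasing, it is at most `ln (1 + P κ)` on the first piece and at least
that on the second, so trading the first piece for the second can only increase the rate.
-/

namespace MeasureTheory

variable {α : Type*} [MeasurableSpace α] {μ : Measure α} {f : α → ℝ} {s t : Set α} {c : ℝ}

theorem measureReal_sdiff_eq_of_measure_eq (hs : MeasurableSet s) (ht : MeasurableSet t)
    (hμ : μ s = μ t) (hμs : μ s ≠ ⊤) : μ.real (s \ t) = μ.real (t \ s) := by
  have hμt : μ t ≠ ⊤ := hμ ▸ hμs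
  have hs' := measureReal_sdiff_add_inter (μ := μ) (s := s) ht hμs
  have ht' := measureReal_sdiff_add_inter (μ := μ) (s := t) hs hμt
  have hreal : μ.real s = μ.real t := by rw [measureReal_def, measureReal_def, hμ]
  rw [Set.inter_comm] at ht'
  linarith

theorem setIntegral_le_of_le_const (hs : MeasurableSet s) (hμs : μ s ≠ ⊤)
    (hf : ∀ x ∈ s, f x ≤ c) (hfs : IntegrableOn f s μ) :
    ∫ x in s, f x ∂μ ≤ c * μ.real s := by
  calc ∫ x in s, f x ∂μ ≤ ∫ _ in s, c ∂μ := setIntegral_mono_on hfs (integrableOn_const hμs) hs hf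
    _ = c * μ.real s := by rw [setIntegral_const, smul_eq_mul, mul_comm]

theorem setIntegral_le_setIntegral_of_measure_eq (hs : MeasurableSet s) (ht : MeasurableSet t)
    (hμ : μ s = μ t) (hμs : μ s ≠ ⊤) (hfs : IntegrableOn f s μ) (hft : IntegrableOn f t μ)
    (h_le : ∀ x ∈ s \ t, f x ≤ c) (h_ge : ∀ x ∈ t \ s, c ≤ f x) :
    ∫ x in s, f x ∂μ ≤ ∫ x in t, f x ∂μ := by
  have hμt : μ t ≠ ⊤ := hμ ▸ hμs
  calc ∫ x in s, f x ∂μ = ∫ x in s ∩ t, f x ∂μ + ∫ x in s \ t, f x ∂μ :=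
        (integral_inter_add_sdiff ht hfs).symm
    _ ≤ ∫ x in s ∩ t, f x ∂μ + c * μ.real (s \ t) := by
        gcongr
        exact setIntegral_le_of_le_const (hs.diff ht) (measure_ne_top_of_subset Set.sdiff_subset hμs)
          h_le (hfs.mono_set Set.sdiff_subset)
    _ = ∫ x in t ∩ s, f x ∂μ + c * μ.real (t \ s) := by
        rw [Set.inter_comm, measureReal_sdiff_eq_of_measure_eq hs ht hμ hμs]
    _ ≤ ∫ x in t ∩ s, f x ∂μ + ∫ x in t \ s, f x ∂μ := by
        gcongr
        exact setIntegral_ge_of_const_le_real (ht.diff hs)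
          (measure_ne_top_of_subset Set.sdiff_subset hμt) h_ge (hft.mono_set Set.sdiff_subset)
    _ = ∫ x in t, f x ∂μ := integral_inter_add_sdiff hs hft

end MeasureTheory

theorem Real.monotoneOn_log_one_add_mul {P : ℝ} (hP : 0 ≤ P) :
    MonotoneOn (fun l => Real.log (1 + P * l)) (Set.Ici 0) := by
  intro x hx y _ hxy
  have hx : 0 ≤ x := hx
  exact Real.log_le_log (by positivity) (by gcongr)

theorem single_antenna_threshold_optimal_general
    (P κ : ℝ) (hP : 0 < P) (hκ : 0 ≤ κ)
    (F : Measure ℝ) [IsProbabilityMeasure F]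
    (hint : Integrable (fun l => Real.log (1 + P * l)) F)
    (Ω : Set ℝ) (hΩmeas : MeasurableSet Ω) (hΩsub : Ω ⊆ Set.Ici (0 : ℝ))
    (hpow : F Ω = F (Set.Ici κ)) :
    ∫ l in Ω, Real.log (1 + P * l) ∂F ≤ ∫ l in Set.Ici κ, Real.log (1 + P * l) ∂F := by
  have hmono := Real.monotoneOn_log_one_add_mul hP.le
  refine setIntegral_le_setIntegral_of_measure_eq (c := Real.log (1 + P * κ)) hΩmeas
    measurableSet_Ici hpow (measure_ne_top F Ω) hint.integrableOn hint.integrableOn ?_ ?_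
  · rintro x ⟨hxΩ, hxκ⟩
    exact hmono (hΩsub hxΩ) hκ ((not_le.mp hxκ).le)
  · rintro x ⟨hxκ, -⟩
    exact hmono hκ (le_trans hκ hxκ) hxκ

/-- Single-antenna case of the optimality of threshold power on/off strategies
(Theorem 1): among all on/off regions `Ω ⊆ [0,∞)` with the same probability
(average power) as the threshold region `Ω* = {λ : λ ≥ κ}`, the threshold region
maximizes the expected rate `∫ ln(1 + Pλ) dF`. -/
theorem single_antenna_threshold_optimal
    (P κ : ℝ) (hP : 0 < P) (hκ : 0 ≤ κ)
    (F : Measure ℝ) [IsProbabilityMeasure F]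
    (hsupp : F (Set.Iio 0) = 0)
    (hint : Integrable (fun l => Real.log (1 + P * l)) F)
    (Ω : Set ℝ) (hΩmeas : MeasurableSet Ω) (hΩsub : Ω ⊆ Set.Ici (0 : ℝ))
    (hpow : F Ω = F (Set.Ici κ)) :
    ∫ l in Ω, Real.log (1 + P * l) ∂F ≤ ∫ l in Set.Ici κ, Real.log (1 + P * l) ∂F :=
  single_antenna_threshold_optimal_general P κ hP hκ F hint Ω hΩmeas hΩsub hpow
end

section
/- Let L be a positive integer, P > 0, κ ≥ 0, and let F be a probability measure on [0,∞)^L such that each map λ = (λ_1,…,λ_L) ↦ ln(1+Pλ_k) is F-integrable. For each k ∈ {1,…,L} set Ω*_k = {λ ∈ [0,∞)^L : λ_k ≥ κ}. Then for all measurable sets Ω_1,…,Ω_L ⊆ [0,∞)^L with Σ_{k=1}^L F(Ω_k) = Σ_{k=1}^L F(Ω*_k), one has Σ_{k=1}^L ∫_{Ω*_k} ln(1+Pλ_k) dF(λ) ≥ Σ_{k=1}^L ∫_{Ω_k} ln(1+Pλ_k) dF(λ). (MIMO case of the optimality of threshold power on/off strategies, Theorem 1.) -/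
/-!
With `c = log (1 + P κ)`, the rate `log (1 + P λ_k)` is at most `c` on `Ω_k \ Ω*_k` and at least
`c` on `Ω*_k \ Ω_k`, so `∫_{Ω_k} log (1 + P λ_k) - c F(Ω_k) ≤ ∫_{Ω*_k} log (1 + P λ_k) - c F(Ω*_k)`
for every `k` (a bathtub argument). Since `c` does not depend on `k`, summing over `k` and using
`Σ_k F(Ω_k) = Σ_k F(Ω*_k)` cancels the `c`-terms.
-/

open MeasureTheory

section Bathtub

variable {α : Type*} [MeasurableSpace α] {μ : Measure α} {A B : Set α}

theorem setIntegral_le_setIntegral_of_nonpos_of_nonneg {h : α → ℝ} (hh : Integrable h μ)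
    (hA : MeasurableSet A) (hB : MeasurableSet B)
    (hAB : ∀ x ∈ A \ B, h x ≤ 0) (hBA : ∀ x ∈ B \ A, 0 ≤ h x) :
    ∫ x in A, h x ∂μ ≤ ∫ x in B, h x ∂μ := by
  rw [← integral_inter_add_sdiff hB (hh.integrableOn (s := A)),
    ← integral_inter_add_sdiff hA (hh.integrableOn (s := B)), Set.inter_comm B A]
  linarith [setIntegral_nonpos (μ := μ) (hA.diff hB) hAB,
    setIntegral_nonneg (μ := μ) (hB.diff hA) hBA]

theorem setIntegral_sub_mul_measureReal_le [IsFiniteMeasure μ] {g : α → ℝ} {c : ℝ}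
    (hg : Integrable g μ) (hA : MeasurableSet A) (hB : MeasurableSet B)
    (hAB : ∀ x ∈ A \ B, g x ≤ c) (hBA : ∀ x ∈ B \ A, c ≤ g x) :
    ∫ x in A, g x ∂μ - c * μ.real A ≤ ∫ x in B, g x ∂μ - c * μ.real B := by
  have key := setIntegral_le_setIntegral_of_nonpos_of_nonneg (μ := μ) (h := fun x => g x - c)
    (hg.sub (integrable_const c)) hA hB (fun x hx => sub_nonpos.2 (hAB x hx)) (fun x hx => sub_nonneg.2 (hBA x hx))
  rwa [integral_sub hg.integrableOn (integrableOn_const (measure_ne_top μ A)),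
    integral_sub hg.integrableOn (integrableOn_const (measure_ne_top μ B)),
    setIntegral_const, setIntegral_const, smul_eq_mul, smul_eq_mul, mul_comm, mul_comm _ c] at key

theorem sum_setIntegral_le_of_sum_measure_eq [IsFiniteMeasure μ] {ι : Type*} (s : Finset ι)
    {g : ι → α → ℝ} {c : ℝ} {A B : ι → Set α} (hg : ∀ i, Integrable (g i) μ)
    (hA : ∀ i, MeasurableSet (A i)) (hB : ∀ i, MeasurableSet (B i))
    (hAB : ∀ i, ∀ x ∈ A i \ B i, g i x ≤ c) (hBA : ∀ i, ∀ x ∈ B i \ A i, c ≤ g i x)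
    (hμ : ∑ i ∈ s, μ (A i) = ∑ i ∈ s, μ (B i)) :
    ∑ i ∈ s, ∫ x in A i, g i x ∂μ ≤ ∑ i ∈ s, ∫ x in B i, g i x ∂μ := by
  have hμ' : ∑ i ∈ s, μ.real (A i) = ∑ i ∈ s, μ.real (B i) := by
    simp only [Measure.real, ← ENNReal.toReal_sum (fun i _ => measure_ne_top μ _), hμ]
  have := Finset.sum_le_sum fun i (_ : i ∈ s) =>
    setIntegral_sub_mul_measureReal_le (hg i) (hA i) (hB i) (hAB i) (hBA i)
  simp only [Finset.sum_sub_distrib, ← Finset.mul_sum, hμ'] at this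
  linarith

end Bathtub

theorem Real.log_one_add_mul_le_log_one_add_mul {P s t : ℝ} (hP : 0 ≤ P) (hs : 0 ≤ s)
    (hst : s ≤ t) : Real.log (1 + P * s) ≤ Real.log (1 + P * t) :=
  Real.log_le_log (by positivity) (by gcongr)

theorem measurableSet_nonneg_and_le_apply {ι : Type*} [Countable ι] (κ : ℝ) (k : ι) :
    MeasurableSet {x : ι → ℝ | (∀ j, 0 ≤ x j) ∧ κ ≤ x k} := by
  measurability

theorem mimo_threshold_optimal_general
    (L : ℕ) (P κ : ℝ) (hP : 0 < P) (hκ : 0 ≤ κ)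
    (F : Measure (Fin L → ℝ)) [IsProbabilityMeasure F]
    (hint : ∀ k : Fin L, Integrable (fun x : Fin L → ℝ => Real.log (1 + P * x k)) F)
    (Ω : Fin L → Set (Fin L → ℝ))
    (hΩmeas : ∀ k, MeasurableSet (Ω k))
    (hΩsub : ∀ k, Ω k ⊆ {x : Fin L → ℝ | ∀ j, 0 ≤ x j})
    (hpow : ∑ k : Fin L, F (Ω k)
        = ∑ k : Fin L, F {x : Fin L → ℝ | (∀ j, 0 ≤ x j) ∧ κ ≤ x k}) :
    ∑ k : Fin L, ∫ x in Ω k, Real.log (1 + P * x k) ∂F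
      ≤ ∑ k : Fin L, ∫ x in {x : Fin L → ℝ | (∀ j, 0 ≤ x j) ∧ κ ≤ x k},
          Real.log (1 + P * x k) ∂F := by
  refine sum_setIntegral_le_of_sum_measure_eq (c := Real.log (1 + P * κ)) _ hint hΩmeas
    (fun k => measurableSet_nonneg_and_le_apply κ k) (fun k x hx => ?_) (fun k x hx => ?_) hpow
  · have hx0 : ∀ j, 0 ≤ x j := hΩsub k hx.1
    have hxκ : x k ≤ κ := le_of_not_ge fun h => hx.2 ⟨hx0, h⟩
    exact Real.log_one_add_mul_le_log_one_add_mul hP.le (hx0 k) hxκ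
  · exact Real.log_one_add_mul_le_log_one_add_mul hP.le hκ hx.1.2

/-- MIMO case of the optimality of threshold power on/off strategies (Theorem 1):
for a probability measure `F` on `[0,∞)^L` (joint law of the eigenvalues of the
channel Gram matrix), among all families of on/off regions `Ω_k ⊆ [0,∞)^L` with the
same total average power `Σ_k F(Ω_k) = Σ_k F(Ω*_k)` as the threshold regions
`Ω*_k = {λ ∈ [0,∞)^L : λ_k ≥ κ}`, the threshold regions maximize the total rate. -/
theorem mimo_threshold_optimal
    (L : ℕ) (hL : 0 < L) (P κ : ℝ) (hP : 0 < P) (hκ : 0 ≤ κ)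
    (F : Measure (Fin L → ℝ)) [IsProbabilityMeasure F]
    (hsupp : ∀ᵐ x ∂F, ∀ k, 0 ≤ x k)
    (hint : ∀ k : Fin L, Integrable (fun x : Fin L → ℝ => Real.log (1 + P * x k)) F)
    (Ω : Fin L → Set (Fin L → ℝ))
    (hΩmeas : ∀ k, MeasurableSet (Ω k))
    (hΩsub : ∀ k, Ω k ⊆ {x : Fin L → ℝ | ∀ j, 0 ≤ x j})
    (hpow : ∑ k : Fin L, F (Ω k)
        = ∑ k : Fin L, F {x : Fin L → ℝ | (∀ j, 0 ≤ x j) ∧ κ ≤ x k}) :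
    ∑ k : Fin L, ∫ x in Ω k, Real.log (1 + P * x k) ∂F
      ≤ ∑ k : Fin L, ∫ x in {x : Fin L → ℝ | (∀ j, 0 ≤ x j) ∧ κ ≤ x k},
          Real.log (1 + P * x k) ∂F :=
  mimo_threshold_optimal_general L P κ hP hκ F hint Ω hΩmeas hΩsub hpow
end

section
/- Let h : (a,b) → ℝ be differentiable on the open interval (a,b). Assume that for every x ∈ (a,b), h(x) = 0 implies h'(x) < 0. Then h has at most one zero in (a,b); moreover, if x₀ ∈ (a,b) is a zero of h, then h(x) > 0 for all x ∈ (a,x₀) and h(x) < 0 for all x ∈ (x₀,b). (Lemma used in the proof of Theorem 3.) -/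
/-!
To the right of a point where `h ≤ 0`, the set `{h ≤ 0}` propagates by continuous induction: at
points with `h < 0` by continuity, at zeros because `h' < 0` pushes `h` below zero immediately to
the right. A later zero `x` is then impossible, since `h' x < 0` forces `h > 0` just left of `x`.
Reflecting to `x ↦ -h (-x)` gives the statement to the left, and two zeros would contradict each
other.
-/

open Set Filter Topology

namespace HasDerivAt

variable {f : ℝ → ℝ} {f' x : ℝ}

theorem eventually_nhdsGT_lt_of_neg (hf : HasDerivAt f f' x) (hf' : f' < 0) :
    ∀ᶠ y in 𝓝[>] x, f y < f x := by
  filter_upwards [(hf.tendsto_slope.mono_left (nhdsGT_le_nhdsNE x)).eventually_lt_const hf',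
    self_mem_nhdsWithin] with y hslope (hxy : x < y)
  rw [slope_def_field, div_lt_iff₀ (sub_pos.mpr hxy)] at hslope
  linarith

theorem eventually_nhdsLT_gt_of_neg (hf : HasDerivAt f f' x) (hf' : f' < 0) :
    ∀ᶠ y in 𝓝[<] x, f x < f y := by
  filter_upwards [(hf.tendsto_slope.mono_left (nhdsLT_le_nhdsNE x)).eventually_lt_const hf',
    self_mem_nhdsWithin] with y hslope (hyx : y < x)
  rw [slope_def_field, div_lt_iff_of_neg (sub_neg.mpr hyx)] at hslope
  linarith

end HasDerivAt

section NegDerivAtZeros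

variable {a b : ℝ} {h : ℝ → ℝ}

theorem neg_right_of_nonpos_of_neg_deriv_at_zeros
    (hdiff : ∀ x ∈ Ioo a b, DifferentiableAt ℝ h x)
    (hzero : ∀ x ∈ Ioo a b, h x = 0 → deriv h x < 0)
    {x₀ : ℝ} (hx₀ : x₀ ∈ Ioo a b) (hx₀_nonpos : h x₀ ≤ 0) :
    ∀ x ∈ Ioo x₀ b, h x < 0 := by
  intro x hx
  have hsub : Icc x₀ x ⊆ Ioo a b := Icc_subset_Ioo hx₀.1 hx.2
  have hx_mem : x ∈ Icc x₀ x := right_mem_Icc.mpr hx.1.le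
  have hnonpos : Icc x₀ x ⊆ {y | h y ≤ 0} := by
    refine IsClosed.Icc_subset_of_forall_mem_nhdsWithin ?_ hx₀_nonpos ?_
    · rw [inter_comm]
      exact ContinuousOn.preimage_isClosed_of_isClosed
        (fun y hy => (hdiff y (hsub hy)).continuousAt.continuousWithinAt) isClosed_Icc isClosed_Iic
    · rintro y ⟨hy : h y ≤ 0, hyI⟩
      have hy_mem : y ∈ Ioo a b := hsub (Ico_subset_Icc_self hyI)
      have hd := (hdiff y hy_mem).hasDerivAt
      rcases hy.lt_or_eq with hneg | hy_zero
      · exact nhdsWithin_le_nhds <|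
          (hd.continuousAt.eventually (gt_mem_nhds hneg)).mono fun _ => le_of_lt
      · exact (hd.eventually_nhdsGT_lt_of_neg (hzero y hy_mem hy_zero)).mono
          fun _ hz => (hz.trans_eq hy_zero).le
  have hx_nonpos : h x ≤ 0 := hnonpos hx_mem
  rcases hx_nonpos.lt_or_eq with hneg | hx_zero
  · exact hneg
  obtain ⟨y, hy_pos, hy⟩ := ((hdiff x (hsub hx_mem)).hasDerivAt.eventually_nhdsLT_gt_of_neg
    (hzero x (hsub hx_mem) hx_zero) |>.and (Ioo_mem_nhdsLT hx.1)).exists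
  have : h y ≤ 0 := hnonpos (Ioo_subset_Icc_self hy)
  linarith

theorem differentiableAt_neg_comp_neg_of_mem_Ioo
    (hdiff : ∀ x ∈ Ioo a b, DifferentiableAt ℝ h x) :
    ∀ y ∈ Ioo (-b) (-a), DifferentiableAt ℝ (fun y => -h (-y)) y := by
  intro y hy
  have hy' : -y ∈ Ioo a b := ⟨lt_neg.mp hy.2, neg_lt.mp hy.1⟩
  exact ((hdiff (-y) hy').comp y differentiableAt_id.neg).neg

theorem deriv_neg_comp_neg_at_zeros
    (hzero : ∀ x ∈ Ioo a b, h x = 0 → deriv h x < 0) :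
    ∀ y ∈ Ioo (-b) (-a), -h (-y) = 0 → deriv (fun y => -h (-y)) y < 0 := by
  intro y hy hy_zero
  rw [deriv.fun_neg, deriv_comp_neg, neg_neg]
  exact hzero (-y) ⟨lt_neg.mp hy.2, neg_lt.mp hy.1⟩ (neg_eq_zero.mp hy_zero)

theorem pos_left_of_nonneg_of_neg_deriv_at_zeros
    (hdiff : ∀ x ∈ Ioo a b, DifferentiableAt ℝ h x)
    (hzero : ∀ x ∈ Ioo a b, h x = 0 → deriv h x < 0)
    {x₀ : ℝ} (hx₀ : x₀ ∈ Ioo a b) (hx₀_nonneg : 0 ≤ h x₀) :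
    ∀ x ∈ Ioo a x₀, 0 < h x := by
  intro x hx
  have := neg_right_of_nonpos_of_neg_deriv_at_zeros
    (differentiableAt_neg_comp_neg_of_mem_Ioo hdiff) (deriv_neg_comp_neg_at_zeros hzero)
    (x₀ := -x₀) ⟨neg_lt_neg hx₀.2, neg_lt_neg hx₀.1⟩ (by simpa using hx₀_nonneg)
    (-x) ⟨neg_lt_neg hx.2, neg_lt_neg hx.1⟩
  simpa using this

end NegDerivAtZeros

/-- Lemma 2 (used in the proof of Theorem 3): if `h` is differentiable on the open
interval `(a,b)` and every zero of `h` has negative derivative, then `h` has at most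
one zero in `(a,b)`; moreover if `x₀ ∈ (a,b)` is a zero of `h`, then `h > 0` on
`(a,x₀)` and `h < 0` on `(x₀,b)`. -/
theorem unique_zero_of_neg_deriv_at_zeros
    (a b : ℝ) (h : ℝ → ℝ)
    (hdiff : ∀ x ∈ Set.Ioo a b, DifferentiableAt ℝ h x)
    (hzero : ∀ x ∈ Set.Ioo a b, h x = 0 → deriv h x < 0) :
    (∀ x₀ ∈ Set.Ioo a b, ∀ x₁ ∈ Set.Ioo a b, h x₀ = 0 → h x₁ = 0 → x₀ = x₁) ∧
    (∀ x₀ ∈ Set.Ioo a b, h x₀ = 0 →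
      (∀ x ∈ Set.Ioo a x₀, 0 < h x) ∧ (∀ x ∈ Set.Ioo x₀ b, h x < 0)) := by
  have right : ∀ x₀ ∈ Ioo a b, h x₀ = 0 → ∀ x ∈ Ioo x₀ b, h x < 0 :=
    fun x₀ hx₀ h0 => neg_right_of_nonpos_of_neg_deriv_at_zeros hdiff hzero hx₀ h0.le
  refine ⟨fun x₀ hx₀ x₁ hx₁ h0 h1 => ?_, fun x₀ hx₀ h0 =>
    ⟨pos_left_of_nonneg_of_neg_deriv_at_zeros hdiff hzero hx₀ h0.ge, right x₀ hx₀ h0⟩⟩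
  rcases lt_trichotomy x₀ x₁ with hlt | heq | hgt
  · exact absurd h1 (right x₀ hx₀ h0 x₁ ⟨hlt, hx₁.2⟩).ne
  · exact heq
  · exact absurd h0 (right x₁ hx₁ h1 x₀ ⟨hgt, hx₀.2⟩).ne
end

section
/- Fix y ∈ (0,1] and ρ > 0. Then the function Ī : [0,π) → ℝ is differentiable on (0,π), its derivative Ī' has at most one zero in (0,π), and: (i) if a₀ ∈ (0,π) satisfies Ī'(a₀) = 0, then Ī(a₀) ≥ Ī(a) for every a ∈ [0,π); (ii) if Ī'(a) ≠ 0 for all a ∈ (0,π), then Ī(0) ≥ Ī(a) for every a ∈ [0,π). (Theorem 3: characterization of the optimal threshold a maximizing the asymptotic information rate.) -/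
open MeasureTheory intervalIntegral

/-- The asymptotic empirical density of `t` after the change of variables
`λ(t) = (1/y)(1 + y - 2√y cos t)` (equation (5) of the paper). -/
noncomputable def fT (y t : ℝ) : ℝ :=
  if y < 1 then
    (1 / Real.pi) * (1 - Real.cos (2 * t)) / (1 + y - 2 * Real.sqrt y * Real.cos t)
  else (1 + Real.cos t) / Real.pi

/-- The asymptotic normalized number of on-beams corresponding to threshold `a`. -/
noncomputable def sbar (y a : ℝ) : ℝ := ∫ t in a..Real.pi, fT y t

/-- The asymptotic normalized information rate of the power on/off strategy with
threshold `a` and SNR `ρ` (equation (8) of the paper). -/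
noncomputable def Ibar (y ρ a : ℝ) : ℝ :=
  ∫ t in a..Real.pi,
    Real.log (1 + (ρ / (y * sbar y a)) * (1 + y - 2 * Real.sqrt y * Real.cos t)) * fT y t

/-!
Reparametrize by the log-SNR `γ(a) = log (ρ / (y s̄(a)))`, so that the integrand is smooth in the
parameter; Leibniz' rule then gives `Ī'(a) = f_T(a) G(a)` with
`G(a) = 1 - E(a)/s̄(a) - log (1 + e^{γ(a)} y λ(a))`, where `E(a) = ∫_a^π f_T / (1 + e^γ y λ)` is the
integrated MMSE. At a root of `G`, Cauchy–Schwarz (`E² ≤ Q s̄`, `Q` the integrated squared MMSE)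
and `e^L ≤ 1 + L + L²/2` for `L ≤ 0` force `G' < 0`, so `G` crosses zero at most once, and only
downwards. Since `G → -∞` as `a → π`, `Ī` increases up to the root of `G` and decreases after it,
or decreases on all of `[0, π)` if there is none.
-/

open Real Set Filter Topology

section Leibniz

variable {E : Type*} [NormedAddCommGroup E] [NormedSpace ℝ E] {φ ψ : ℝ → ℝ → E}

theorem hasDerivAt_integral_param_upper [CompleteSpace E] {g : ℝ → ℝ} {a : ℝ}
    (hφ : Continuous fun p : ℝ × ℝ => φ p.1 p.2) (hg : ContinuousAt g a) :
    HasDerivAt (fun b => ∫ t in a..b, φ (g b) t) (φ (g a) a) a := by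
  rw [hasDerivAt_iff_isLittleO, Asymptotics.isLittleO_iff]
  intro ε hε
  obtain ⟨δ, hδ, hφδ⟩ := Metric.continuousAt_iff.1 (hφ.continuousAt (x := (g a, a))) ε hε
  have hg' : ∀ᶠ b in 𝓝 a, dist (g b) (g a) < δ ∧ dist b a < δ :=
    (Metric.continuousAt_iff'.1 hg δ hδ).and (Metric.ball_mem_nhds a hδ)
  filter_upwards [hg'] with b ⟨hgb, hb⟩
  have hφb : Continuous (φ (g b)) := hφ.comp (Continuous.prodMk_right (g b))
  have hint : ∫ t in a..b, (φ (g b) t - φ (g a) a) =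
      (∫ t in a..b, φ (g b) t) - (b - a) • φ (g a) a := by
    rw [integral_sub (hφb.intervalIntegrable _ _) intervalIntegrable_const,
      intervalIntegral.integral_const]
  rw [integral_same, sub_zero, ← hint, Real.norm_eq_abs]
  refine intervalIntegral.norm_integral_le_of_norm_le_const fun t ht => ?_
  rw [← dist_eq_norm]
  refine (hφδ (x := (g b, t)) ?_).le
  rw [Prod.dist_eq, max_lt_iff, Real.dist_eq t]
  rw [Real.dist_eq] at hb
  exact ⟨hgb, (abs_sub_left_of_mem_uIcc (uIoc_subset_uIcc ht)).trans_lt hb⟩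

theorem hasDerivAt_integral_param (hφ : Continuous fun p : ℝ × ℝ => φ p.1 p.2)
    (hψ : Continuous fun p : ℝ × ℝ => ψ p.1 p.2) (hd : ∀ x t, HasDerivAt (φ · t) (ψ x t) x)
    (a b x₀ : ℝ) :
    HasDerivAt (fun x => ∫ t in a..b, φ x t) (∫ t in a..b, ψ x₀ t) x₀ := by
  have hφx : ∀ x, Continuous (φ x) := fun x => hφ.comp (Continuous.prodMk_right x)
  have hψx₀ : Continuous (ψ x₀) := hψ.comp (Continuous.prodMk_right x₀)
  obtain ⟨C, hC⟩ := ((isCompact_closedBall x₀ 1).prod isCompact_uIcc).exists_bound_of_continuousOn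
    hψ.continuousOn
  refine (hasDerivAt_integral_of_dominated_loc_of_deriv_le (bound := fun _ => C)
    (Metric.ball_mem_nhds x₀ one_pos) (Eventually.of_forall fun x => (hφx x).aestronglyMeasurable)
    ((hφx x₀).intervalIntegrable _ _) hψx₀.aestronglyMeasurable
    (Eventually.of_forall fun t ht x hx =>
      hC (x, t) ⟨Metric.ball_subset_closedBall hx, Ioc_subset_Icc_self ht⟩)
    intervalIntegrable_const (Eventually.of_forall fun t _ x _ => hd x t)).2

theorem hasDerivAt_integral_param_lower [CompleteSpace E]
    (hφ : Continuous fun p : ℝ × ℝ => φ p.1 p.2) (hψ : Continuous fun p : ℝ × ℝ => ψ p.1 p.2)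
    (hd : ∀ x t, HasDerivAt (φ · t) (ψ x t) x) {g : ℝ → ℝ} {g' a : ℝ} (hg : HasDerivAt g g' a)
    (b : ℝ) :
    HasDerivAt (fun a => ∫ t in a..b, φ (g a) t)
      (g' • (∫ t in a..b, ψ (g a) t) - φ (g a) a) a := by
  have hsplit : (fun a' => ∫ t in a'..b, φ (g a') t) =
      fun a' => (∫ t in a..b, φ (g a') t) - ∫ t in a..a', φ (g a') t := by
    ext a'
    have hi : Continuous (φ (g a')) := hφ.comp (Continuous.prodMk_right (g a'))
    exact (integral_interval_sub_left (hi.intervalIntegrable a b) (hi.intervalIntegrable a a')).symm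
  rw [hsplit]
  exact ((hasDerivAt_integral_param hφ hψ hd a b (g a)).scomp a hg).sub
    (hasDerivAt_integral_param_upper hφ hg.continuousAt)

end Leibniz

section ZeroCrossing

variable {f : ℝ → ℝ} {d x : ℝ}

theorem HasDerivAt.eventually_nhdsGT_lt (hf : HasDerivAt f d x) (hd : d < 0) :
    ∀ᶠ u in 𝓝[>] x, f u < f x := by
  filter_upwards [nhdsGT_le_nhdsNE x (hasDerivAt_iff_tendsto_slope.1 hf (Iio_mem_nhds hd)),
    self_mem_nhdsWithin] with u hu hxu
  exact (slope_neg_iff_of_le (le_of_lt hxu)).1 hu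

theorem HasDerivAt.eventually_nhdsLT_gt (hf : HasDerivAt f d x) (hd : d < 0) :
    ∀ᶠ u in 𝓝[<] x, f x < f u := by
  filter_upwards [nhdsLT_le_nhdsNE x (hasDerivAt_iff_tendsto_slope.1 hf (Iio_mem_nhds hd)),
    self_mem_nhdsWithin] with u hu hux
  rw [mem_preimage, mem_Iio, slope_comm] at hu
  exact (slope_neg_iff_of_le (le_of_lt hux)).1 hu

variable {s : Set ℝ}

theorem Set.OrdConnected.pos_of_lt_root (hs : s.OrdConnected) (hcont : ∀ x ∈ s, ContinuousAt f x)
    (hroot : ∀ x ∈ s, f x = 0 → ∃ d < 0, HasDerivAt f d x) ⦃x₀ : ℝ⦄ (hx₀ : x₀ ∈ s)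
    (h₀ : f x₀ = 0) ⦃x : ℝ⦄ (hx : x ∈ s) (hlt : x < x₀) : 0 < f x := by
  by_contra! hfx
  obtain ⟨d, hd, hf₀⟩ := hroot x₀ hx₀ h₀
  obtain ⟨v, hv, hxv, hvx₀⟩ :=
    ((hf₀.eventually_nhdsLT_gt hd).and (Ioo_mem_nhdsLT hlt)).exists
  rw [h₀] at hv
  have hsub : Icc x v ⊆ s := hs.out hx (hs.out hx hx₀ ⟨hxv.le, hvx₀.le⟩)
  have hK : IsCompact (Icc x v ∩ f ⁻¹' Iic 0) :=
    isCompact_Icc.of_isClosed_subset ((continuousOn_of_forall_continuousAt fun u hu =>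
      hcont u (hsub hu)).preimage_isClosed_of_isClosed isClosed_Icc isClosed_Iic) inter_subset_left
  obtain ⟨z, ⟨hzI, hz⟩, hzmax⟩ := hK.exists_isGreatest ⟨x, left_mem_Icc.2 hxv.le, hfx⟩
  have hzv : z < v := hzI.2.lt_of_ne fun h => by rw [h] at hz; exact hz.not_gt hv
  have hneg : ∀ᶠ u in 𝓝[>] z, f u < 0 := by
    rcases (show f z ≤ 0 from hz).lt_or_eq with hz | hz
    · exact nhdsWithin_le_nhds ((hcont z (hsub hzI)).eventually (gt_mem_nhds hz))
    · obtain ⟨d, hd, hfz⟩ := hroot z (hsub hzI) hz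
      simpa only [hz] using hfz.eventually_nhdsGT_lt hd
  obtain ⟨u, hu, hzu, huv⟩ := (hneg.and (Ioo_mem_nhdsGT hzv)).exists
  exact (hzmax ⟨⟨hzI.1.trans hzu.le, huv.le⟩, hu.le⟩).not_gt hzu

theorem Set.OrdConnected.neg_of_root_lt (hs : s.OrdConnected) (hcont : ∀ x ∈ s, ContinuousAt f x)
    (hroot : ∀ x ∈ s, f x = 0 → ∃ d < 0, HasDerivAt f d x) ⦃x₀ : ℝ⦄ (hx₀ : x₀ ∈ s)
    (h₀ : f x₀ = 0) ⦃x : ℝ⦄ (hx : x ∈ s) (hlt : x₀ < x) : f x < 0 := by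
  -- `u ↦ -f (-u)` again crosses zero only downwards, and reflection swaps the two sides.
  have hs' : (Neg.neg ⁻¹' s).OrdConnected :=
    ⟨fun a ha b hb t ht => hs.out hb ha ⟨neg_le_neg ht.2, neg_le_neg ht.1⟩⟩
  have := hs'.pos_of_lt_root (f := fun u => -f (-u))
    (fun u hu => ((hcont _ hu).comp continuous_neg.continuousAt).neg)
    (fun u hu hfu => by
      obtain ⟨d, hd, hfd⟩ := hroot _ hu (neg_eq_zero.1 hfu)
      have := (hfd.comp u (hasDerivAt_neg u)).neg
      simp only [mul_neg, mul_one, neg_neg] at this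
      exact ⟨d, hd, this⟩)
    (x₀ := -x₀) (x := -x) (by simpa using hx₀) (by simpa using h₀) (by simpa using hx)
    (neg_lt_neg hlt)
  simpa using this

end ZeroCrossing

/-- From the bound for `exp (-x)`, since `(1 + x + x²/2) (1 - x + x²/2) = 1 + x⁴/4 ≥ 1`. -/
theorem exp_le_quadratic_of_nonpos {x : ℝ} (hx : x ≤ 0) : exp x ≤ 1 + x + x ^ 2 / 2 := by
  have h := quadratic_le_exp_of_nonneg (neg_nonneg.2 hx)
  have hinv : exp x * exp (-x) = 1 := by rw [← exp_add, add_neg_cancel, exp_zero]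
  nlinarith [exp_pos x, mul_le_mul_of_nonneg_left h (exp_pos x).le, sq_nonneg (x ^ 2)]

theorem sq_integral_mul_le {w h : ℝ → ℝ} {a b : ℝ} (hab : a ≤ b) (hw : ∀ t ∈ Icc a b, 0 ≤ w t)
    (hw_int : IntervalIntegrable w volume a b)
    (hwh_int : IntervalIntegrable (fun t => w t * h t) volume a b)
    (hwh2_int : IntervalIntegrable (fun t => w t * h t ^ 2) volume a b) :
    (∫ t in a..b, w t * h t) ^ 2 ≤ (∫ t in a..b, w t * h t ^ 2) * ∫ t in a..b, w t := by
  have hquad : ∀ m : ℝ, 0 ≤ (∫ t in a..b, w t) * (m * m) + (-2 * ∫ t in a..b, w t * h t) * m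
      + ∫ t in a..b, w t * h t ^ 2 := by
    intro m
    have hexpand : (fun t => w t * (h t - m) ^ 2) =
        fun t => (w t * h t ^ 2 - (2 * m) * (w t * h t)) + (m * m) * w t := by
      ext t; ring
    have hnonneg : 0 ≤ ∫ t in a..b, w t * (h t - m) ^ 2 :=
      integral_nonneg hab fun t ht => mul_nonneg (hw t ht) (sq_nonneg _)
    rw [hexpand, integral_add (hwh2_int.sub (hwh_int.const_mul _)) (hw_int.const_mul _),
      integral_sub hwh2_int (hwh_int.const_mul _), intervalIntegral.integral_const_mul,
      intervalIntegral.integral_const_mul] at hnonneg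
    linarith
  have := discrim_le_zero hquad
  rw [discrim] at this
  linarith

namespace PowerOnOff

/-- `y · λ(t)` in the notation of the paper. -/
noncomputable def lam (y t : ℝ) : ℝ := 1 + y - 2 * √y * cos t

variable {y ρ a : ℝ}

theorem sq_one_sub_sqrt_le_lam (hy : 0 ≤ y) (t : ℝ) : (1 - √y) ^ 2 ≤ lam y t := by
  have := sq_sqrt hy
  unfold lam
  nlinarith [cos_le_one t, sqrt_nonneg y]

theorem lam_nonneg (hy : 0 ≤ y) (t : ℝ) : 0 ≤ lam y t :=
  (sq_nonneg _).trans (sq_one_sub_sqrt_le_lam hy t)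

theorem lam_pos (hy : 0 ≤ y) (hy1 : y < 1) (t : ℝ) : 0 < lam y t := by
  have : √y < 1 := (sqrt_lt' one_pos).2 (by simpa using hy1)
  exact (pow_pos (sub_pos.2 this) 2).trans_le (sq_one_sub_sqrt_le_lam hy t)

@[fun_prop]
theorem continuous_lam (y : ℝ) : Continuous (lam y) := by
  unfold lam; fun_prop

theorem hasDerivAt_lam (y t : ℝ) : HasDerivAt (lam y) (2 * √y * sin t) t :=
  (((hasDerivAt_cos t).const_mul (2 * √y)).const_sub (1 + y)).congr_deriv (by ring)

theorem continuous_fT (hy : 0 ≤ y) : Continuous (fT y) := by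
  by_cases h : y < 1
  · unfold fT
    simp only [if_pos h]
    exact Continuous.div (by fun_prop) (continuous_lam y) fun t => (lam_pos hy h t).ne'
  · unfold fT
    simp only [if_neg h]
    fun_prop

theorem fT_nonneg (hy : 0 ≤ y) (t : ℝ) : 0 ≤ fT y t := by
  by_cases h : y < 1
  · rw [fT, if_pos h]
    exact div_nonneg (mul_nonneg (by positivity) (sub_nonneg.2 (cos_le_one _)))
      (lam_pos hy h t).le
  · rw [fT, if_neg h]
    exact div_nonneg (by linarith [neg_one_le_cos t]) pi_pos.le

theorem fT_pos (hy : 0 ≤ y) {t : ℝ} (ht : t ∈ Ioo 0 π) : 0 < fT y t := by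
  by_cases h : y < 1
  · have hcos : 1 - cos (2 * t) = 2 * sin t ^ 2 := by rw [cos_two_mul, cos_sq']; ring
    rw [fT, if_pos h, hcos]
    have := sin_pos_of_pos_of_lt_pi ht.1 ht.2
    exact div_pos (by positivity) (lam_pos hy h t)
  · rw [fT, if_neg h]
    have := cos_lt_cos_of_nonneg_of_le_pi ht.1.le le_rfl ht.2
    rw [cos_pi] at this
    exact div_pos (by linarith) pi_pos

theorem hasDerivAt_sbar (hy : 0 ≤ y) (a : ℝ) : HasDerivAt (sbar y) (-fT y a) a :=
  integral_hasDerivAt_left ((continuous_fT hy).intervalIntegrable _ _)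
    ((continuous_fT hy).stronglyMeasurableAtFilter _ _) (continuous_fT hy).continuousAt

theorem sbar_pos (hy : 0 ≤ y) (ha : a < π) : 0 < sbar y a := by
  have hanti : Antitone (sbar y) :=
    antitone_of_hasDerivAt_nonpos (hasDerivAt_sbar hy) fun t => neg_nonpos.2 (fT_nonneg hy t)
  calc 0 < sbar y (max a 0) :=
        intervalIntegral_pos_of_pos_on ((continuous_fT hy).intervalIntegrable _ _)
          (fun t ht => fT_pos hy ⟨(le_max_right a 0).trans_lt ht.1, ht.2⟩) (max_lt ha pi_pos)
    _ ≤ sbar y a := hanti (le_max_left a 0)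

theorem tendsto_sbar_nhdsLT_pi (hy : 0 ≤ y) : Tendsto (sbar y) (𝓝[<] π) (𝓝[>] 0) := by
  refine tendsto_nhdsWithin_iff.2 ⟨?_, eventually_nhdsWithin_of_forall fun a ha => sbar_pos hy ha⟩
  have := (hasDerivAt_sbar hy π).continuousAt.tendsto.mono_left (nhdsWithin_le_nhds (s := Iio π))
  rwa [sbar, integral_same] at this

/-- The logarithm of the per-beam SNR `ρ / (y s̄(a))`. Parametrizing by it makes the integrands
below smooth in the parameter on all of `ℝ`. -/
noncomputable def logSnr (y ρ a : ℝ) : ℝ := log (ρ / y) - log (sbar y a)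

theorem exp_logSnr (hy : 0 < y) (hρ : 0 < ρ) (ha : a < π) :
    exp (logSnr y ρ a) = ρ / (y * sbar y a) := by
  rw [logSnr, exp_sub, exp_log (div_pos hρ hy), exp_log (sbar_pos hy.le ha), div_div]

theorem hasDerivAt_logSnr (hy : 0 ≤ y) (ha : a < π) :
    HasDerivAt (logSnr y ρ) (fT y a / sbar y a) a :=
  (((hasDerivAt_sbar hy a).log (sbar_pos hy ha).ne').const_sub (log (ρ / y))).congr_deriv
    (by ring)

theorem tendsto_logSnr_nhdsLT_pi (hy : 0 ≤ y) : Tendsto (logSnr y ρ) (𝓝[<] π) atTop :=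
  tendsto_atTop_add_const_left _ _
    (tendsto_neg_atBot_atTop.comp (tendsto_log_nhdsGT_zero.comp (tendsto_sbar_nhdsLT_pi hy)))

theorem one_add_exp_mul_lam_pos (hy : 0 ≤ y) (u t : ℝ) : 0 < 1 + exp u * lam y t := by
  have := lam_nonneg hy t
  positivity

/-- The MMSE `1 / (1 + snr)` of a scalar Gaussian channel at SNR `e^u · y λ(t)`. -/
noncomputable def mmse (y u t : ℝ) : ℝ := (1 + exp u * lam y t)⁻¹

theorem mmse_pos (hy : 0 ≤ y) (u t : ℝ) : 0 < mmse y u t :=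
  inv_pos.2 (one_add_exp_mul_lam_pos hy u t)

theorem mmse_le_one (hy : 0 ≤ y) (u t : ℝ) : mmse y u t ≤ 1 :=
  inv_le_one_of_one_le₀ (le_add_of_nonneg_right (by have := lam_nonneg hy t; positivity))

theorem continuous_mmse (hy : 0 ≤ y) : Continuous fun p : ℝ × ℝ => mmse y p.1 p.2 := by
  unfold mmse
  exact Continuous.inv₀ (by fun_prop) fun p => (one_add_exp_mul_lam_pos hy p.1 p.2).ne'

theorem hasDerivAt_log_one_add_exp_mul_lam (hy : 0 ≤ y) (u t : ℝ) :
    HasDerivAt (fun u => log (1 + exp u * lam y t)) (1 - mmse y u t) u := by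
  refine ((((hasDerivAt_exp u).mul_const (lam y t)).const_add 1).log
    (one_add_exp_mul_lam_pos hy u t).ne').congr_deriv ?_
  rw [mmse]
  field_simp [(one_add_exp_mul_lam_pos hy u t).ne']
  ring

theorem hasDerivAt_mmse (hy : 0 ≤ y) (u t : ℝ) :
    HasDerivAt (fun u => mmse y u t) (mmse y u t ^ 2 - mmse y u t) u := by
  refine ((((hasDerivAt_exp u).mul_const (lam y t)).const_add 1).inv
    (one_add_exp_mul_lam_pos hy u t).ne').congr_deriv ?_
  rw [mmse]
  field_simp [(one_add_exp_mul_lam_pos hy u t).ne']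
  ring

theorem continuous_log_one_add_exp_mul_lam (hy : 0 ≤ y) :
    Continuous fun p : ℝ × ℝ => log (1 + exp p.1 * lam y p.2) :=
  Continuous.log (by fun_prop) fun p => (one_add_exp_mul_lam_pos hy p.1 p.2).ne'

theorem Ibar_eq_integral (hy : 0 < y) (hρ : 0 < ρ) (ha : a < π) :
    Ibar y ρ a = ∫ t in a..π, log (1 + exp (logSnr y ρ a) * lam y t) * fT y t := by
  rw [exp_logSnr hy hρ ha]
  rfl

noncomputable def mmseIntegral (y ρ a : ℝ) : ℝ :=
  ∫ t in a..π, fT y t * mmse y (logSnr y ρ a) t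

noncomputable def mmseSqIntegral (y ρ a : ℝ) : ℝ :=
  ∫ t in a..π, fT y t * mmse y (logSnr y ρ a) t ^ 2

noncomputable def derivFactor (y ρ a : ℝ) : ℝ :=
  1 - mmseIntegral y ρ a / sbar y a - log (1 + exp (logSnr y ρ a) * lam y a)

theorem hasDerivAt_Ibar (hy : 0 < y) (hρ : 0 < ρ) (ha : a < π) :
    HasDerivAt (Ibar y ρ) (fT y a * derivFactor y ρ a) a := by
  have hf := continuous_fT hy.le
  have hL := hasDerivAt_integral_param_lower
    (φ := fun u t => log (1 + exp u * lam y t) * fT y t)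
    (ψ := fun u t => (1 - mmse y u t) * fT y t)
    ((continuous_log_one_add_exp_mul_lam hy.le).mul (hf.comp continuous_snd))
    ((continuous_const.sub (continuous_mmse hy.le)).mul (hf.comp continuous_snd))
    (fun u t => (hasDerivAt_log_one_add_exp_mul_lam hy.le u t).mul_const _)
    (hasDerivAt_logSnr (ρ := ρ) hy.le ha) π
  have hm : Continuous (mmse y (logSnr y ρ a)) :=
    (continuous_mmse hy.le).comp (Continuous.prodMk_right _)
  have hfm : IntervalIntegrable (fun t => fT y t * mmse y (logSnr y ρ a) t) volume a π :=
    (hf.mul hm).intervalIntegrable _ _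
  have hsplit : ∫ t in a..π, (1 - mmse y (logSnr y ρ a) t) * fT y t =
      sbar y a - mmseIntegral y ρ a := by
    rw [sbar, mmseIntegral, ← integral_sub (hf.intervalIntegrable _ _) hfm]
    exact integral_congr fun t _ => by ring
  refine (hL.congr_of_eventuallyEq ?_).congr_deriv ?_
  · filter_upwards [Iio_mem_nhds ha] with a' ha' using Ibar_eq_integral hy hρ ha'
  · rw [smul_eq_mul, hsplit, derivFactor]
    field_simp [(sbar_pos hy.le ha).ne']

theorem hasDerivAt_mmseIntegral (hy : 0 ≤ y) (ha : a < π) :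
    HasDerivAt (mmseIntegral y ρ)
      (fT y a / sbar y a * (mmseSqIntegral y ρ a - mmseIntegral y ρ a) -
        fT y a * mmse y (logSnr y ρ a) a) a := by
  have hf := continuous_fT hy
  have hL := hasDerivAt_integral_param_lower
    (φ := fun u t => fT y t * mmse y u t)
    (ψ := fun u t => fT y t * (mmse y u t ^ 2 - mmse y u t))
    ((hf.comp continuous_snd).mul (continuous_mmse hy))
    ((hf.comp continuous_snd).mul (((continuous_mmse hy).pow 2).sub (continuous_mmse hy)))
    (fun u t => (hasDerivAt_mmse hy u t).const_mul _)
    (hasDerivAt_logSnr (ρ := ρ) hy ha) π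
  have hsplit : ∫ t in a..π, fT y t * (mmse y (logSnr y ρ a) t ^ 2 - mmse y (logSnr y ρ a) t) =
      mmseSqIntegral y ρ a - mmseIntegral y ρ a := by
    have hm : Continuous (mmse y (logSnr y ρ a)) :=
      (continuous_mmse hy).comp (Continuous.prodMk_right _)
    have hfm2 : IntervalIntegrable (fun t => fT y t * mmse y (logSnr y ρ a) t ^ 2) volume a π :=
      (hf.mul (hm.pow 2)).intervalIntegrable _ _
    have hfm : IntervalIntegrable (fun t => fT y t * mmse y (logSnr y ρ a) t) volume a π :=
      (hf.mul hm).intervalIntegrable _ _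
    rw [mmseSqIntegral, mmseIntegral, ← integral_sub hfm2 hfm]
    exact integral_congr fun t _ => by ring
  exact hL.congr_deriv (by rw [smul_eq_mul, hsplit])

theorem hasDerivAt_derivFactor (hy : 0 ≤ y) (ha : a < π) :
    HasDerivAt (derivFactor y ρ)
      (fT y a / sbar y a * (2 * mmse y (logSnr y ρ a) a - 1 - mmseSqIntegral y ρ a / sbar y a) -
        exp (logSnr y ρ a) * (2 * √y * sin a) * mmse y (logSnr y ρ a) a) a := by
  have hs := (sbar_pos hy ha).ne'
  have hx := (((hasDerivAt_logSnr (ρ := ρ) hy ha).exp.mul (hasDerivAt_lam y a)).const_add 1).log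
    (one_add_exp_mul_lam_pos hy (logSnr y ρ a) a).ne'
  refine ((((hasDerivAt_mmseIntegral hy ha).div (hasDerivAt_sbar hy a) hs).const_sub 1).sub
    hx).congr_deriv ?_
  simp only [Pi.mul_apply, mmse]
  field_simp [(one_add_exp_mul_lam_pos hy (logSnr y ρ a) a).ne']
  ring

theorem mmseIntegral_nonneg (hy : 0 ≤ y) (ha : a < π) : 0 ≤ mmseIntegral y ρ a :=
  integral_nonneg ha.le fun t _ => mul_nonneg (fT_nonneg hy t) (mmse_pos hy _ t).le

theorem sq_mmseIntegral_le (hy : 0 ≤ y) (ha : a < π) :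
    mmseIntegral y ρ a ^ 2 ≤ mmseSqIntegral y ρ a * sbar y a := by
  have hf := continuous_fT hy
  have hm : Continuous (mmse y (logSnr y ρ a)) :=
    (continuous_mmse hy).comp (Continuous.prodMk_right _)
  exact sq_integral_mul_le ha.le (fun t _ => fT_nonneg hy t) (hf.intervalIntegrable _ _)
    ((hf.mul hm).intervalIntegrable _ _) ((hf.mul (hm.pow 2)).intervalIntegrable _ _)

theorem continuousAt_derivFactor (hy : 0 ≤ y) (ha : a < π) : ContinuousAt (derivFactor y ρ) a :=
  (hasDerivAt_derivFactor hy ha).continuousAt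

theorem exists_hasDerivAt_derivFactor_neg (hy : 0 < y) (ha : a ∈ Ioo 0 π)
    (hroot : derivFactor y ρ a = 0) : ∃ d < 0, HasDerivAt (derivFactor y ρ) d a := by
  refine ⟨_, ?_, hasDerivAt_derivFactor hy.le ha.2⟩
  have hmean : mmseIntegral y ρ a / sbar y a = 1 + log (mmse y (logSnr y ρ a) a) := by
    rw [derivFactor] at hroot
    rw [mmse, log_inv]
    linarith
  set m := mmse y (logSnr y ρ a) a
  have hs := sbar_pos hy.le ha.2
  have hm0 : 0 < m := mmse_pos hy.le _ a
  have hCS : (1 + log m) ^ 2 ≤ mmseSqIntegral y ρ a / sbar y a := by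
    rw [← hmean, div_pow, div_le_div_iff₀ (by positivity) hs]
    nlinarith [sq_mmseIntegral_le (ρ := ρ) hy.le ha.2]
  have hquad : 2 * m - 1 ≤ (1 + log m) ^ 2 := by
    have := exp_le_quadratic_of_nonpos (log_nonpos hm0.le (mmse_le_one hy.le _ a))
    rw [exp_log hm0] at this
    nlinarith
  have hfirst : fT y a / sbar y a * (2 * m - 1 - mmseSqIntegral y ρ a / sbar y a) ≤ 0 :=
    mul_nonpos_of_nonneg_of_nonpos (div_nonneg (fT_nonneg hy.le a) hs.le) (by linarith)
  have hsin := sin_pos_of_pos_of_lt_pi ha.1 ha.2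
  have hsqrt := sqrt_pos.2 hy
  have hsecond : 0 < exp (logSnr y ρ a) * (2 * √y * sin a) * m := by positivity
  linarith

theorem exists_derivFactor_neg (hy : 0 < y) : ∃ b ∈ Ioo 0 π, derivFactor y ρ b < 0 := by
  have hlam : Tendsto (lam y) (𝓝[<] π) (𝓝 (lam y π)) :=
    (continuous_lam y).continuousAt.tendsto.mono_left nhdsWithin_le_nhds
  have hlamπ : 0 < lam y π := by
    rw [lam, cos_pi]
    linarith [sqrt_nonneg y]
  have hlog : Tendsto (fun a => log (1 + exp (logSnr y ρ a) * lam y a)) (𝓝[<] π) atTop :=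
    tendsto_log_atTop.comp (tendsto_atTop_add_const_left _ _
      ((tendsto_exp_atTop.comp (tendsto_logSnr_nhdsLT_pi hy.le)).atTop_mul_pos hlamπ hlam))
  obtain ⟨b, hb, hbI⟩ := ((hlog.eventually_gt_atTop 1).and (Ioo_mem_nhdsLT pi_pos)).exists
  refine ⟨b, hbI, ?_⟩
  have := div_nonneg (mmseIntegral_nonneg (ρ := ρ) hy.le hbI.2) (sbar_pos hy.le hbI.2).le
  rw [derivFactor]
  linarith

theorem derivFactor_neg_of_forall_ne_zero (hy : 0 < y)
    (hne : ∀ a ∈ Ioo 0 π, derivFactor y ρ a ≠ 0) (ha : a ∈ Ioo 0 π) : derivFactor y ρ a < 0 := by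
  obtain ⟨b, hb, hGb⟩ := exists_derivFactor_neg (ρ := ρ) hy
  by_contra! hGa
  obtain ⟨c, hc, hc0⟩ := isPreconnected_Ioo.intermediate_value hb ha
    (fun x hx => (continuousAt_derivFactor hy.le hx.2).continuousWithinAt) ⟨hGb.le, hGa⟩
  exact hne c hc hc0

theorem Ibar_le_of_derivFactor_nonneg (hy : 0 < y) (hρ : 0 < ρ) {b : ℝ} (hab : a ≤ b)
    (hb : b < π) (hG : ∀ v ∈ Ioo a b, 0 ≤ derivFactor y ρ v) : Ibar y ρ a ≤ Ibar y ρ b := by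
  have hI : ∀ v ∈ Icc a b, HasDerivAt (Ibar y ρ) (fT y v * derivFactor y ρ v) v :=
    fun v hv => hasDerivAt_Ibar hy hρ (hv.2.trans_lt hb)
  refine monotoneOn_of_hasDerivWithinAt_nonneg (convex_Icc a b)
    (fun v hv => (hI v hv).continuousAt.continuousWithinAt)
    (fun v hv => (hI v (interior_subset hv)).hasDerivWithinAt) (fun v hv => ?_)
    (left_mem_Icc.2 hab) (right_mem_Icc.2 hab) hab
  rw [interior_Icc] at hv
  exact mul_nonneg (fT_nonneg hy.le v) (hG v hv)

theorem Ibar_le_of_derivFactor_nonpos (hy : 0 < y) (hρ : 0 < ρ) {b : ℝ} (hab : a ≤ b)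
    (hb : b < π) (hG : ∀ v ∈ Ioo a b, derivFactor y ρ v ≤ 0) : Ibar y ρ b ≤ Ibar y ρ a := by
  have hI : ∀ v ∈ Icc a b, HasDerivAt (Ibar y ρ) (fT y v * derivFactor y ρ v) v :=
    fun v hv => hasDerivAt_Ibar hy hρ (hv.2.trans_lt hb)
  refine antitoneOn_of_hasDerivWithinAt_nonpos (convex_Icc a b)
    (fun v hv => (hI v hv).continuousAt.continuousWithinAt)
    (fun v hv => (hI v (interior_subset hv)).hasDerivWithinAt) (fun v hv => ?_)
    (left_mem_Icc.2 hab) (right_mem_Icc.2 hab) hab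
  rw [interior_Icc] at hv
  exact mul_nonpos_of_nonneg_of_nonpos (fT_nonneg hy.le v) (hG v hv)

end PowerOnOff

open PowerOnOff

/-- Theorem 3: for fixed `y ∈ (0,1]` and SNR `ρ > 0`, the asymptotic information
rate `Ī` is differentiable on `(0,π)`, its derivative has at most one zero in
`(0,π)`, and the optimal threshold maximizing `Ī` over `[0,π)` is either the unique
zero of `Ī'` in `(0,π)` if it exists, or `0` if `Ī'` never vanishes on `(0,π)`. -/
theorem optimal_threshold_characterization
    (y ρ : ℝ) (hy : y ∈ Set.Ioc (0 : ℝ) 1) (hρ : 0 < ρ) :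
    (∀ a ∈ Set.Ioo 0 Real.pi, DifferentiableAt ℝ (Ibar y ρ) a) ∧
    (∀ a₀ ∈ Set.Ioo 0 Real.pi, ∀ a₁ ∈ Set.Ioo 0 Real.pi,
      deriv (Ibar y ρ) a₀ = 0 → deriv (Ibar y ρ) a₁ = 0 → a₀ = a₁) ∧
    (∀ a₀ ∈ Set.Ioo 0 Real.pi, deriv (Ibar y ρ) a₀ = 0 →
      ∀ a ∈ Set.Ico 0 Real.pi, Ibar y ρ a ≤ Ibar y ρ a₀) ∧
    ((∀ a ∈ Set.Ioo 0 Real.pi, deriv (Ibar y ρ) a ≠ 0) →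
      ∀ a ∈ Set.Ico 0 Real.pi, Ibar y ρ a ≤ Ibar y ρ 0) := by
  have hy0 := hy.1
  have hI := fun a (ha : a ∈ Ioo 0 π) => hasDerivAt_Ibar hy0 hρ ha.2
  have hroot : ∀ a ∈ Ioo 0 π, deriv (Ibar y ρ) a = 0 ↔ derivFactor y ρ a = 0 := fun a ha => by
    rw [(hI a ha).deriv, mul_eq_zero, or_iff_right (fT_pos hy0.le ha).ne']
  have hcont := fun a (ha : a ∈ Ioo 0 π) => continuousAt_derivFactor (ρ := ρ) hy0.le ha.2
  have hcross := fun a ha => exists_hasDerivAt_derivFactor_neg (ρ := ρ) hy0 (a := a) ha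
  have hpos := ordConnected_Ioo.pos_of_lt_root hcont hcross
  have hneg := ordConnected_Ioo.neg_of_root_lt hcont hcross
  refine ⟨fun a ha => (hI a ha).differentiableAt, ?_, ?_, ?_⟩
  · intro a₀ h₀ a₁ h₁ hd₀ hd₁
    rw [hroot a₀ h₀] at hd₀
    rw [hroot a₁ h₁] at hd₁
    by_contra hne
    rcases lt_or_gt_of_ne hne with h | h
    · exact (hpos h₁ hd₁ h₀ h).ne' hd₀
    · exact (hpos h₀ hd₀ h₁ h).ne' hd₁
  · intro a₀ h₀ hd₀ a ha
    rw [hroot a₀ h₀] at hd₀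
    rcases le_or_gt a a₀ with h | h
    · exact Ibar_le_of_derivFactor_nonneg hy0 hρ h h₀.2 fun v hv =>
        (hpos h₀ hd₀ ⟨ha.1.trans_lt hv.1, hv.2.trans h₀.2⟩ hv.2).le
    · exact Ibar_le_of_derivFactor_nonpos hy0 hρ h.le ha.2 fun v hv =>
        (hneg h₀ hd₀ ⟨h₀.1.trans hv.1, hv.2.trans ha.2⟩ hv.1).le
  · intro hne a ha
    refine Ibar_le_of_derivFactor_nonpos hy0 hρ ha.1 ha.2 fun v hv => ?_
    have hv' : v ∈ Ioo 0 π := ⟨hv.1, hv.2.trans ha.2⟩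
    exact (derivFactor_neg_of_forall_ne_zero hy0
      (fun c hc hc0 => hne c hc ((hroot c hc).2 hc0)) hv').le
end

section
/- Fix y ∈ (0,1] and let 0 < ρ₀ < ρ₁. If a₀ ∈ [0,π) maximizes Ī(·; ρ₀) over [0,π) and a₁ ∈ [0,π) maximizes Ī(·; ρ₁) over [0,π), then a₁ ≤ a₀. (Corollary 2: the optimal threshold a is a non-increasing function of the SNR ρ.) -/
/-!
Suppose `a₀ < a₁`. With `g = gain y`, `f = fT y` and `kᵢ = 1 / (y s̄(aᵢ))`, so that `k₀ ≤ k₁`,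
the rates are `Ī(aᵢ; ρ) = Fᵢ(ρ) = ∫_{aᵢ}^π log (1 + ρ kᵢ g) f`, and `σ = F₁ - F₀` satisfies
`σ(ρ₀) ≤ 0 ≤ σ(ρ₁)`. At a zero `r` of `σ`, the capacity that `a₁` gains on `[a₁, π]` exactly
offsets what it loses on `[a₀, a₁]`; since `g` is increasing, the two ranges lie on either side of
`M = r k₀ g(a₁)`, and comparing `x / (1 + x)` with `log (1 + x)` on each side (concavity of
`log (1 + x)`, then `log (1 + M) < M`) gives `r σ'(r) < 0`. So `σ` can only cross zero
downwards and stays negative on `(ρ₀, ρ₁]`, a contradiction.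
-/

open MeasureTheory intervalIntegral

open Set Filter Topology

lemma div_one_add_sub_div_one_add_le {M x₀ x₁ : ℝ} (hM : 0 ≤ M) (hMx₀ : M ≤ x₀)
    (hx₀x₁ : x₀ ≤ x₁) :
    x₁ / (1 + x₁) - x₀ / (1 + x₀) ≤ (Real.log (1 + x₁) - Real.log (1 + x₀)) / (1 + M) := by
  have h₀ : 0 < 1 + x₀ := by linarith
  have h₁ : 0 < 1 + x₁ := by linarith
  have hlog : (x₁ - x₀) / (1 + x₁) ≤ Real.log (1 + x₁) - Real.log (1 + x₀) := by
    rw [← Real.log_div h₁.ne' h₀.ne']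
    convert Real.one_sub_inv_le_log_of_pos (div_pos h₁ h₀) using 1
    field_simp
    ring
  calc x₁ / (1 + x₁) - x₀ / (1 + x₀) = (x₁ - x₀) / (1 + x₁) / (1 + x₀) := by
        field_simp
        ring
    _ ≤ (x₁ - x₀) / (1 + x₁) / (1 + M) :=
        div_le_div_of_nonneg_left (div_nonneg (by linarith) h₁.le) (by linarith) (by linarith)
    _ ≤ _ := div_le_div_of_nonneg_right hlog (by linarith)

lemma log_one_add_mul_le {x M : ℝ} (hx : 0 ≤ x) (hxM : x ≤ M) :
    Real.log (1 + x) * (M / (1 + M)) ≤ Real.log (1 + M) * (x / (1 + x)) := by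
  rcases hx.eq_or_lt with rfl | hx
  · simp
  have hx₁ : 0 < 1 + x := by linarith
  have hM₁ : 0 < 1 + M := by linarith
  have hu : 0 < Real.log (1 + x) := Real.log_pos (by linarith)
  have hv : 0 < Real.log (1 + M) := Real.log_pos (by linarith)
  -- secant slopes of `exp` through `0` increase; compare them at `-log (1 + M) ≤ -log (1 + x)`
  have hsec := convexOn_exp.secant_mono (a := 0) (mem_univ _) (mem_univ _) (mem_univ _)
    (neg_ne_zero.2 hv.ne') (neg_ne_zero.2 hu.ne')
    (neg_le_neg (Real.log_le_log hx₁ (by linarith)))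
  simp only [Real.exp_neg, Real.exp_log hM₁, Real.exp_log hx₁, Real.exp_zero,
    sub_zero] at hsec
  have e₁ : (1 + M)⁻¹ - 1 = -(M / (1 + M)) := by field_simp; ring
  have e₂ : (1 + x)⁻¹ - 1 = -(x / (1 + x)) := by field_simp; ring
  rw [e₁, e₂, neg_div_neg_eq, neg_div_neg_eq, div_le_div_iff₀ hv hu] at hsec
  linarith

lemma HasDerivAt.eventually_neg_right_and_pos_left {σ : ℝ → ℝ} {d r : ℝ}
    (h : HasDerivAt σ d r) (hd : d < 0) (hr : σ r = 0) :
    (∀ᶠ x in 𝓝[>] r, σ x < 0) ∧ ∀ᶠ x in 𝓝[<] r, 0 < σ x := by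
  have hslope : ∀ᶠ x in 𝓝[≠] r, slope σ r x < 0 :=
    (hasDerivAt_iff_tendsto_slope.1 h).eventually_lt_const hd
  constructor
  · filter_upwards [nhdsWithin_mono _ (fun x hx => ne_of_gt hx) hslope, self_mem_nhdsWithin]
      with x hx hxr
    rw [slope_def_field, hr, sub_zero] at hx
    have hσx := mul_neg_of_neg_of_pos hx (sub_pos.2 hxr)
    rwa [div_mul_cancel₀ _ (sub_pos.2 hxr).ne'] at hσx
  · filter_upwards [nhdsWithin_mono _ (fun x hx => ne_of_lt hx) hslope, self_mem_nhdsWithin]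
      with x hx hxr
    rw [slope_def_field, hr, sub_zero] at hx
    have hσx := mul_pos_of_neg_of_neg hx (sub_neg.2 hxr)
    rwa [div_mul_cancel₀ _ (sub_neg.2 hxr).ne] at hσx

lemma neg_of_hasDerivAt_of_deriv_neg_at_zeros {σ σ' : ℝ → ℝ} {a b : ℝ} (hab : a < b)
    (hderiv : ∀ x ∈ Icc a b, HasDerivAt σ (σ' x) x)
    (hzero : ∀ x ∈ Icc a b, σ x = 0 → σ' x < 0) (ha : σ a ≤ 0) : σ b < 0 := by
  have hcont : ContinuousOn σ (Icc a b) :=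
    fun x hx => (hderiv x hx).continuousAt.continuousWithinAt
  have hsign : ∀ x ∈ Icc a b, σ x = 0 →
      (∀ᶠ z in 𝓝[>] x, σ z < 0) ∧ ∀ᶠ z in 𝓝[<] x, 0 < σ z :=
    fun x hx h0 => (hderiv x hx).eventually_neg_right_and_pos_left (hzero x hx h0) h0
  have hnonpos : Icc a b ⊆ {x | σ x ≤ 0} := by
    refine IsClosed.Icc_subset_of_forall_mem_nhdsWithin ?_ ha ?_
    · rw [inter_comm]
      exact hcont.preimage_isClosed_of_isClosed isClosed_Icc isClosed_Iic
    · rintro x ⟨hx, hxI⟩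
      rcases (show σ x ≤ 0 from hx).lt_or_eq with hneg | h0
      · refine mem_nhdsWithin_of_mem_nhds ?_
        filter_upwards [(hderiv x (Ico_subset_Icc_self hxI)).continuousAt.eventually_lt
          continuousAt_const hneg] with z hz using hz.le
      · exact (hsign x (Ico_subset_Icc_self hxI) h0).1.mono fun z hz => hz.le
  rcases (show σ b ≤ 0 from hnonpos (right_mem_Icc.2 hab.le)).lt_or_eq with hneg | h0
  · exact hneg
  · obtain ⟨z, hz, hzI⟩ :=
      ((hsign b (right_mem_Icc.2 hab.le) h0).2.and (Ico_mem_nhdsLT hab)).exists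
    exact absurd (hnonpos (Ico_subset_Icc_self hzI)) (not_le.2 hz)

noncomputable def infoRate (f g : ℝ → ℝ) (a b c : ℝ) : ℝ :=
  ∫ t in a..b, Real.log (1 + c * g t) * f t

noncomputable def infoRateDeriv (f g : ℝ → ℝ) (a b c : ℝ) : ℝ :=
  ∫ t in a..b, g t / (1 + c * g t) * f t

section InfoRate

variable {f g : ℝ → ℝ}

lemma one_add_mul_pos {c : ℝ} (hg₀ : ∀ t, 0 ≤ g t) (hc : 0 ≤ c) (t : ℝ) :
    0 < 1 + c * g t := by
  have := mul_nonneg hc (hg₀ t)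
  linarith

lemma continuous_log_one_add_mul_mul (hf : Continuous f) (hg : Continuous g)
    (hg₀ : ∀ t, 0 ≤ g t) {c : ℝ} (hc : 0 ≤ c) :
    Continuous fun t => Real.log (1 + c * g t) * f t :=
  ((continuous_const.add (continuous_const.mul hg)).log
    fun t => (one_add_mul_pos hg₀ hc t).ne').mul hf

lemma continuous_div_one_add_mul_mul (hf : Continuous f) (hg : Continuous g)
    (hg₀ : ∀ t, 0 ≤ g t) {c : ℝ} (hc : 0 ≤ c) :
    Continuous fun t => g t / (1 + c * g t) * f t :=
  (hg.div (continuous_const.add (continuous_const.mul hg))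
    fun t => (one_add_mul_pos hg₀ hc t).ne').mul hf

lemma hasDerivAt_infoRate (hf : Continuous f) (hg : Continuous g) (hg₀ : ∀ t, 0 ≤ g t)
    (a b : ℝ) {c : ℝ} (hc : 0 < c) :
    HasDerivAt (infoRate f g a b) (infoRateDeriv f g a b c) c := by
  refine (intervalIntegral.hasDerivAt_integral_of_dominated_loc_of_deriv_le
    (F := fun x t => Real.log (1 + x * g t) * f t)
    (F' := fun x t => g t / (1 + x * g t) * f t) (bound := fun t => ‖g t * f t‖)
    (Ioi_mem_nhds hc) ?_ ?_ ?_ ?_ ?_ ?_).2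
  · filter_upwards [Ioi_mem_nhds hc] with x hx
    exact (continuous_log_one_add_mul_mul hf hg hg₀ (le_of_lt hx)).aestronglyMeasurable
  · exact (continuous_log_one_add_mul_mul hf hg hg₀ hc.le).intervalIntegrable _ _
  · exact (continuous_div_one_add_mul_mul hf hg hg₀ hc.le).aestronglyMeasurable
  · refine ae_of_all _ fun t _ x hx => ?_
    rw [norm_mul, norm_mul, norm_div, Real.norm_of_nonneg (hg₀ t),
      Real.norm_of_nonneg (one_add_mul_pos hg₀ (le_of_lt hx) t).le]
    gcongr
    exact div_le_self (hg₀ t) (le_add_of_nonneg_right (mul_nonneg (le_of_lt hx) (hg₀ t)))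
  · exact (by fun_prop : Continuous _).intervalIntegrable _ _
  · refine ae_of_all _ fun t _ x hx => ?_
    exact (((hasDerivAt_mul_const (g t)).const_add 1).log
      (one_add_mul_pos hg₀ (le_of_lt hx) t).ne').mul_const (f t)

lemma infoRate_add_adjacent (hf : Continuous f) (hg : Continuous g) (hg₀ : ∀ t, 0 ≤ g t)
    {c : ℝ} (hc : 0 ≤ c) (a b b' : ℝ) :
    infoRate f g a b c + infoRate f g b b' c = infoRate f g a b' c :=
  intervalIntegral.integral_add_adjacent_intervals
    ((continuous_log_one_add_mul_mul hf hg hg₀ hc).intervalIntegrable _ _)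
    ((continuous_log_one_add_mul_mul hf hg hg₀ hc).intervalIntegrable _ _)

lemma infoRateDeriv_add_adjacent (hf : Continuous f) (hg : Continuous g) (hg₀ : ∀ t, 0 ≤ g t)
    {c : ℝ} (hc : 0 ≤ c) (a b b' : ℝ) :
    infoRateDeriv f g a b c + infoRateDeriv f g b b' c = infoRateDeriv f g a b' c :=
  intervalIntegral.integral_add_adjacent_intervals
    ((continuous_div_one_add_mul_mul hf hg hg₀ hc).intervalIntegrable _ _)
    ((continuous_div_one_add_mul_mul hf hg hg₀ hc).intervalIntegrable _ _)

lemma mul_infoRateDeriv_sub_le (hf : Continuous f) (hg : Continuous g)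
    (hf₀ : ∀ t, 0 ≤ f t) (hg₀ : ∀ t, 0 ≤ g t) {a b c₀ c₁ M : ℝ} (hab : a ≤ b) (hM : 0 ≤ M)
    (hc₀ : 0 ≤ c₀) (hc : c₀ ≤ c₁) (hMg : ∀ t ∈ Icc a b, M ≤ c₀ * g t) :
    c₁ * infoRateDeriv f g a b c₁ - c₀ * infoRateDeriv f g a b c₀
      ≤ (infoRate f g a b c₁ - infoRate f g a b c₀) / (1 + M) := by
  have hl := fun c (hc : 0 ≤ c) =>
    (continuous_log_one_add_mul_mul hf hg hg₀ hc).intervalIntegrable (μ := volume) a b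
  have hw := fun c (hc : 0 ≤ c) =>
    ((continuous_div_one_add_mul_mul hf hg hg₀ hc).intervalIntegrable (μ := volume) a b
      ).const_mul c
  have hc₁ := hc₀.trans hc
  rw [infoRateDeriv, infoRateDeriv, infoRate, infoRate,
    ← intervalIntegral.integral_const_mul, ← intervalIntegral.integral_const_mul,
    ← intervalIntegral.integral_sub (hw c₁ hc₁) (hw c₀ hc₀),
    ← intervalIntegral.integral_sub (hl c₁ hc₁) (hl c₀ hc₀), ← intervalIntegral.integral_div]
  refine intervalIntegral.integral_mono_on hab ((hw c₁ hc₁).sub (hw c₀ hc₀))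
    (((hl c₁ hc₁).sub (hl c₀ hc₀)).div_const _) fun t ht => ?_
  have hpt := div_one_add_sub_div_one_add_le hM (hMg t ht)
    (mul_le_mul_of_nonneg_right hc (hg₀ t))
  calc _ = (c₁ * g t / (1 + c₁ * g t) - c₀ * g t / (1 + c₀ * g t)) * f t := by ring
    _ ≤ (Real.log (1 + c₁ * g t) - Real.log (1 + c₀ * g t)) / (1 + M) * f t :=
      mul_le_mul_of_nonneg_right hpt (hf₀ t)
    _ = _ := by ring

lemma infoRate_mul_le (hf : Continuous f) (hg : Continuous g) (hf₀ : ∀ t, 0 ≤ f t)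
    (hg₀ : ∀ t, 0 ≤ g t) {a b c M : ℝ} (hab : a ≤ b) (hc : 0 ≤ c)
    (hgM : ∀ t ∈ Icc a b, c * g t ≤ M) :
    infoRate f g a b c * (M / (1 + M)) ≤ Real.log (1 + M) * (c * infoRateDeriv f g a b c) := by
  rw [infoRate, infoRateDeriv, ← intervalIntegral.integral_mul_const,
    ← intervalIntegral.integral_const_mul, ← intervalIntegral.integral_const_mul]
  refine intervalIntegral.integral_mono_on hab
    (((continuous_log_one_add_mul_mul hf hg hg₀ hc).intervalIntegrable _ _).mul_const _)
    ((((continuous_div_one_add_mul_mul hf hg hg₀ hc).intervalIntegrable _ _).const_mul _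
      ).const_mul _)
    fun t ht => ?_
  calc _ = Real.log (1 + c * g t) * (M / (1 + M)) * f t := by ring
    _ ≤ Real.log (1 + M) * (c * g t / (1 + c * g t)) * f t :=
      mul_le_mul_of_nonneg_right (log_one_add_mul_le (mul_nonneg hc (hg₀ t)) (hgM t ht)) (hf₀ t)
    _ = _ := by ring

lemma mul_infoRateDeriv_lt_of_infoRate_eq (hf : Continuous f) (hg : Continuous g)
    (hf₀ : ∀ t, 0 ≤ f t) (hg₀ : ∀ t, 0 ≤ g t) {a₀ a₁ b c₀ c₁ : ℝ} (ha : a₀ < a₁)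
    (ha₁ : a₁ ≤ b) (hmono : MonotoneOn g (Icc a₀ b))
    (hpos : ∀ t ∈ Ioo a₀ a₁, 0 < g t ∧ 0 < f t) (hc₀ : 0 < c₀) (hc : c₀ ≤ c₁)
    (heq : infoRate f g a₁ b c₁ = infoRate f g a₀ b c₀) :
    c₁ * infoRateDeriv f g a₁ b c₁ < c₀ * infoRateDeriv f g a₀ b c₀ := by
  have hmem : ∀ {t}, t ∈ Icc a₀ a₁ → t ∈ Icc a₀ b := fun ht => ⟨ht.1, ht.2.trans ha₁⟩
  have ha₁mem : a₁ ∈ Icc a₀ b := ⟨ha.le, ha₁⟩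
  set M := c₀ * g a₁
  have hM : 0 < M := by
    have hmid : (a₀ + a₁) / 2 ∈ Ioo a₀ a₁ := ⟨by linarith, by linarith⟩
    exact mul_pos hc₀ ((hpos _ hmid).1.trans_le
      (hmono (hmem (Ioo_subset_Icc_self hmid)) ha₁mem hmid.2.le))
  have hC : 0 < infoRate f g a₀ a₁ c₀ := intervalIntegral.intervalIntegral_pos_of_pos_on
    ((continuous_log_one_add_mul_mul hf hg hg₀ hc₀.le).intervalIntegrable _ _)
    (fun t ht => mul_pos (Real.log_pos (by nlinarith [hpos t ht])) (hpos t ht).2) ha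
  have hupper := mul_infoRateDeriv_sub_le (M := M) hf hg hf₀ hg₀ ha₁ hM.le hc₀.le hc
    fun t ht => mul_le_mul_of_nonneg_left (hmono ha₁mem ⟨ha.le.trans ht.1, ht.2⟩ ht.1) hc₀.le
  have hlower := infoRate_mul_le (M := M) hf hg hf₀ hg₀ ha.le hc₀.le
    fun t ht => mul_le_mul_of_nonneg_left (hmono (hmem ht) ha₁mem ht.2) hc₀.le
  have hCW : infoRate f g a₀ a₁ c₀ / (1 + M) < c₀ * infoRateDeriv f g a₀ a₁ c₀ := by
    have hℓ : 0 < Real.log (1 + M) := Real.log_pos (by linarith)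
    have hℓM : Real.log (1 + M) < M := by
      linarith [Real.log_lt_sub_one_of_pos (by linarith : 0 < 1 + M) (by linarith)]
    refine lt_of_mul_lt_mul_left (lt_of_lt_of_le ?_ hlower) hℓ.le
    rw [mul_div_assoc', mul_div_assoc', div_lt_div_iff_of_pos_right (by linarith),
      mul_comm _ M]
    exact mul_lt_mul_of_pos_right hℓM hC
  have hgain : infoRate f g a₁ b c₁ - infoRate f g a₁ b c₀ = infoRate f g a₀ a₁ c₀ := by
    rw [heq, ← infoRate_add_adjacent hf hg hg₀ hc₀.le a₀ a₁ b]
    ring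
  rw [hgain] at hupper
  rw [← infoRateDeriv_add_adjacent hf hg hg₀ hc₀.le a₀ a₁ b, mul_add]
  linarith

lemma infoRate_single_crossing (hf : Continuous f) (hg : Continuous g)
    (hf₀ : ∀ t, 0 ≤ f t) (hg₀ : ∀ t, 0 ≤ g t) {a₀ a₁ b d₀ d₁ ρ₀ ρ₁ : ℝ} (ha : a₀ < a₁)
    (ha₁ : a₁ ≤ b) (hmono : MonotoneOn g (Icc a₀ b))
    (hpos : ∀ t ∈ Ioo a₀ a₁, 0 < g t ∧ 0 < f t) (hd₁ : 0 < d₁) (hd : d₁ ≤ d₀)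
    (hρ₀ : 0 < ρ₀) (hρ : ρ₀ < ρ₁)
    (h₀ : infoRate f g a₁ b (ρ₀ / d₁) ≤ infoRate f g a₀ b (ρ₀ / d₀)) :
    infoRate f g a₁ b (ρ₁ / d₁) < infoRate f g a₀ b (ρ₁ / d₀) := by
  have hd₀ : 0 < d₀ := hd₁.trans_le hd
  refine sub_neg.1 (neg_of_hasDerivAt_of_deriv_neg_at_zeros (a := ρ₀) (b := ρ₁)
    (σ := fun ρ => infoRate f g a₁ b (ρ / d₁) - infoRate f g a₀ b (ρ / d₀))
    (σ' := fun ρ => infoRateDeriv f g a₁ b (ρ / d₁) * (1 / d₁)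
      - infoRateDeriv f g a₀ b (ρ / d₀) * (1 / d₀)) hρ ?_ ?_ (sub_nonpos.2 h₀))
  · intro ρ hρ'
    have hρpos : 0 < ρ := hρ₀.trans_le hρ'.1
    exact ((hasDerivAt_infoRate hf hg hg₀ a₁ b (div_pos hρpos hd₁)).comp ρ
      ((hasDerivAt_id ρ).div_const d₁)).sub
      ((hasDerivAt_infoRate hf hg hg₀ a₀ b (div_pos hρpos hd₀)).comp ρ
        ((hasDerivAt_id ρ).div_const d₀))
  · intro r hr h0
    have hr₀ : 0 < r := hρ₀.trans_le hr.1
    have hkey := mul_infoRateDeriv_lt_of_infoRate_eq hf hg hf₀ hg₀ ha ha₁ hmono hpos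
      (div_pos hr₀ hd₀) (div_le_div_of_nonneg_left hr₀.le hd₁ hd) (sub_eq_zero.1 h0)
    refine neg_of_mul_neg_right (a := r) ?_ hr₀.le
    exact (sub_neg.2 hkey).trans_eq' (by ring)

end InfoRate

-- `y λ(t)` in the notation of `fT`
noncomputable def gain (y t : ℝ) : ℝ := 1 + y - 2 * Real.sqrt y * Real.cos t

section Density

variable {y : ℝ}

lemma continuous_gain (y : ℝ) : Continuous (gain y) := by
  unfold gain
  fun_prop

lemma sq_one_sub_sqrt_le_gain (hy : 0 ≤ y) (t : ℝ) : (1 - Real.sqrt y) ^ 2 ≤ gain y t := by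
  unfold gain
  nlinarith [Real.sq_sqrt hy, Real.sqrt_nonneg y, Real.cos_le_one t]

lemma gain_nonneg (hy : 0 ≤ y) (t : ℝ) : 0 ≤ gain y t :=
  (sq_nonneg _).trans (sq_one_sub_sqrt_le_gain hy t)

lemma gain_pos_of_lt_one (hy : 0 ≤ y) (hy₁ : y < 1) (t : ℝ) : 0 < gain y t := by
  have hs : Real.sqrt y < 1 := (Real.sqrt_lt' one_pos).2 (by simpa using hy₁)
  exact (pow_pos (sub_pos.2 hs) 2).trans_le (sq_one_sub_sqrt_le_gain hy t)

lemma gain_pos (hy : 0 < y) {t : ℝ} (ht : t ∈ Ioc 0 Real.pi) : 0 < gain y t := by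
  have hcos : Real.cos t < 1 := by
    simpa using Real.cos_lt_cos_of_nonneg_of_le_pi le_rfl ht.2 ht.1
  unfold gain
  nlinarith [Real.sq_sqrt hy.le, Real.sqrt_pos.2 hy, sq_nonneg (1 - Real.sqrt y)]

lemma monotoneOn_gain (y : ℝ) : MonotoneOn (gain y) (Icc 0 Real.pi) := by
  intro a ha b hb hab
  have := Real.cos_le_cos_of_nonneg_of_le_pi ha.1 hb.2 hab
  unfold gain
  nlinarith [Real.sqrt_nonneg y]

lemma continuous_fT (hy : 0 ≤ y) : Continuous (fT y) := by
  unfold fT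
  split_ifs with hy₁
  · exact Continuous.div (by fun_prop) (continuous_gain y)
      fun t => (gain_pos_of_lt_one hy hy₁ t).ne'
  · fun_prop

lemma fT_nonneg (hy : 0 ≤ y) (t : ℝ) : 0 ≤ fT y t := by
  unfold fT
  split_ifs with hy₁
  · exact div_nonneg (mul_nonneg (by positivity) (sub_nonneg.2 (Real.cos_le_one _)))
      (gain_pos_of_lt_one hy hy₁ t).le
  · exact div_nonneg (by linarith [Real.neg_one_le_cos t]) Real.pi_pos.le

lemma fT_pos (hy : 0 ≤ y) {t : ℝ} (ht : t ∈ Ioo 0 Real.pi) : 0 < fT y t := by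
  unfold fT
  split_ifs with hy₁
  · have hsin := Real.sin_pos_of_pos_of_lt_pi ht.1 ht.2
    have hcos : Real.cos (2 * t) = 1 - 2 * Real.sin t ^ 2 := Real.cos_two_mul_eq_one_sub t
    exact div_pos (mul_pos (by positivity) (by rw [hcos]; nlinarith))
      (gain_pos_of_lt_one hy hy₁ t)
  · have hcos : Real.cos Real.pi < Real.cos t :=
      Real.cos_lt_cos_of_nonneg_of_le_pi ht.1.le le_rfl ht.2
    rw [Real.cos_pi] at hcos
    exact div_pos (by linarith) Real.pi_pos

lemma antitone_sbar (hy : 0 ≤ y) : Antitone (sbar y) := by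
  intro a b hab
  have hsplit := intervalIntegral.integral_add_adjacent_intervals
    ((continuous_fT hy).intervalIntegrable (μ := volume) a b)
    ((continuous_fT hy).intervalIntegrable b Real.pi)
  have hnonneg := intervalIntegral.integral_nonneg (μ := volume) hab fun t _ => fT_nonneg hy t
  unfold sbar
  linarith

lemma sbar_pos (hy : 0 ≤ y) {a : ℝ} (ha : a ∈ Ico 0 Real.pi) : 0 < sbar y a :=
  intervalIntegral.intervalIntegral_pos_of_pos_on ((continuous_fT hy).intervalIntegrable _ _)
    (fun _ ht => fT_pos hy ⟨ha.1.trans_lt ht.1, ht.2⟩) ha.2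

lemma Ibar_eq_infoRate (y ρ a : ℝ) :
    Ibar y ρ a = infoRate (fT y) (gain y) a Real.pi (ρ / (y * sbar y a)) := rfl

end Density

/-- Corollary 2: the optimal threshold `a` maximizing the asymptotic information
rate `Ī(·; ρ)` over `[0,π)` is a non-increasing function of the SNR `ρ`. -/
theorem optimal_threshold_nonincreasing_in_snr
    (y ρ₀ ρ₁ : ℝ) (hy : y ∈ Set.Ioc (0 : ℝ) 1) (hρ₀ : 0 < ρ₀) (hρ : ρ₀ < ρ₁)
    (a₀ a₁ : ℝ) (ha₀ : a₀ ∈ Set.Ico 0 Real.pi) (ha₁ : a₁ ∈ Set.Ico 0 Real.pi)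
    (hmax₀ : ∀ a ∈ Set.Ico 0 Real.pi, Ibar y ρ₀ a ≤ Ibar y ρ₀ a₀)
    (hmax₁ : ∀ a ∈ Set.Ico 0 Real.pi, Ibar y ρ₁ a ≤ Ibar y ρ₁ a₁) :
    a₁ ≤ a₀ := by
  obtain ⟨hy, -⟩ := hy
  by_contra! hlt
  have hd₁ : 0 < y * sbar y a₁ := mul_pos hy (sbar_pos hy.le ha₁)
  have hd : y * sbar y a₁ ≤ y * sbar y a₀ :=
    mul_le_mul_of_nonneg_left (antitone_sbar hy.le hlt.le) hy.le
  have hpos : ∀ t ∈ Ioo a₀ a₁, 0 < gain y t ∧ 0 < fT y t := fun t ht =>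
    ⟨gain_pos hy ⟨ha₀.1.trans_lt ht.1, (ht.2.trans ha₁.2).le⟩,
      fT_pos hy.le ⟨ha₀.1.trans_lt ht.1, ht.2.trans ha₁.2⟩⟩
  have hlose := infoRate_single_crossing (continuous_fT hy.le) (continuous_gain y)
    (fT_nonneg hy.le) (gain_nonneg hy.le) hlt ha₁.2.le
    ((monotoneOn_gain y).mono (Icc_subset_Icc_left ha₀.1)) hpos hd₁ hd hρ₀ hρ
    (by simpa only [Ibar_eq_infoRate] using hmax₀ a₁ ha₁)
  simp only [Ibar_eq_infoRate] at hmax₁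
  exact (hmax₁ a₀ ha₀).not_gt hlose
end

section
/- Let 0 < r < 1, y = r², and a ∈ [0,π]. Then ∫_a^π (1/π)·(1 − cos(2t))/(1 + r² − 2r·cos t) dt = (1/π)·( (π − a) − (1/r)·sin a + ((1 − r²)/r²)·θ_r ), where θ_r = arctan(r·sin a/(1 − r·cos a)). (Proposition 1, case y < 1: closed form for the asymptotic normalized number of on-beams s̄∞.) -/
/-!
The integrand has the elementary antiderivative
`t + sin t / r - ((1 - r²)/r²) · arctan (r sin t / (1 - r cos t))`: differentiating the arctan
term gives `r (cos t - r) / (1 + r² - 2 r cos t)`, because `1 + r² - 2 r cos t` is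
`(1 - r cos t)² + (r sin t)²`. At `t = π` the sine and arctan terms vanish, and the fundamental
theorem of calculus gives the closed form.
-/

open Real

namespace Sbar

lemma one_sub_mul_cos_pos {r : ℝ} (hr : |r| < 1) (t : ℝ) : 0 < 1 - r * cos t := by
  have h : |r * cos t| < 1 := by
    rw [abs_mul]
    nlinarith [abs_cos_le_one t, abs_nonneg r, abs_nonneg (cos t)]
  linarith [le_abs_self (r * cos t)]

lemma one_add_sq_sub_two_mul_cos_eq (r t : ℝ) :
    1 + r ^ 2 - 2 * r * cos t = (1 - r * cos t) ^ 2 + (r * sin t) ^ 2 := by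
  linear_combination -r ^ 2 * sin_sq_add_cos_sq t

lemma one_add_sq_sub_two_mul_cos_pos {r : ℝ} (hr : |r| < 1) (t : ℝ) :
    0 < 1 + r ^ 2 - 2 * r * cos t := by
  rw [one_add_sq_sub_two_mul_cos_eq]
  have := one_sub_mul_cos_pos hr t
  positivity

lemma hasDerivAt_arctan_mul_sin_div {r t : ℝ} (h : 1 - r * cos t ≠ 0) :
    HasDerivAt (fun t => arctan (r * sin t / (1 - r * cos t)))
      (r * (cos t - r) / (1 + r ^ 2 - 2 * r * cos t)) t := by
  have hden : HasDerivAt (fun t => 1 - r * cos t) (r * sin t) t := by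
    simpa using ((hasDerivAt_cos t).const_mul r).const_sub 1
  have hquot := ((hasDerivAt_sin t).const_mul r).div hden h
  refine ((hasDerivAt_arctan _).comp t hquot).congr_deriv ?_
  simp only [Pi.div_apply]
  rw [one_add_sq_sub_two_mul_cos_eq]
  field_simp
  linear_combination -r ^ 2 * sin_sq_add_cos_sq t

noncomputable def antideriv (r t : ℝ) : ℝ :=
  t + (1 / r) * sin t - ((1 - r ^ 2) / r ^ 2) * arctan (r * sin t / (1 - r * cos t))

lemma hasDerivAt_antideriv {r : ℝ} (hr0 : r ≠ 0) (hr : |r| < 1) (t : ℝ) :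
    HasDerivAt (antideriv r)
      ((1 - cos (2 * t)) / (1 + r ^ 2 - 2 * r * cos t)) t := by
  have h := ((hasDerivAt_id t).add ((hasDerivAt_sin t).const_mul (1 / r))).sub
    ((hasDerivAt_arctan_mul_sin_div (one_sub_mul_cos_pos hr t).ne').const_mul
      ((1 - r ^ 2) / r ^ 2))
  refine h.congr_deriv ?_
  have hD := (one_add_sq_sub_two_mul_cos_pos hr t).ne'
  rw [cos_two_mul]
  generalize hDdef : 1 + r ^ 2 - 2 * r * cos t = D at hD ⊢
  field_simp
  linear_combination -(r + cos t) * hDdef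

lemma antideriv_pi (r : ℝ) : antideriv r π = π := by
  simp [antideriv]

end Sbar

open Sbar in
theorem sbar_closed_form_general
    (r a : ℝ) (hr0 : 0 < r) (hr1 : r < 1) :
    ∫ t in a..Real.pi,
        (1 / Real.pi) * (1 - Real.cos (2 * t)) / (1 + r ^ 2 - 2 * r * Real.cos t)
      = (1 / Real.pi) * ((Real.pi - a) - (1 / r) * Real.sin a
          + ((1 - r ^ 2) / r ^ 2)
            * Real.arctan (r * Real.sin a / (1 - r * Real.cos a))) := by
  have hr : |r| < 1 := abs_lt.mpr ⟨by linarith, hr1⟩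
  have hcont : Continuous fun t => (1 - cos (2 * t)) / (1 + r ^ 2 - 2 * r * cos t) :=
    Continuous.div (by fun_prop) (by fun_prop)
      fun t => (one_add_sq_sub_two_mul_cos_pos hr t).ne'
  conv_lhs => simp only [mul_div_assoc]
  rw [intervalIntegral.integral_const_mul, intervalIntegral.integral_eq_sub_of_hasDerivAt
    (fun t _ => hasDerivAt_antideriv hr0.ne' hr t) (hcont.intervalIntegrable a π),
    antideriv_pi, antideriv]
  ring

/-- Proposition 1 (case `y = r² < 1`): closed form for the asymptotic normalized
number of on-beams, `s̄∞ = (1/π)·((π − a) − (1/r)·sin a + ((1 − r²)/r²)·θ_r)` with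
`θ_r = arctan(r sin a / (1 − r cos a))`. -/
theorem sbar_closed_form
    (r a : ℝ) (hr0 : 0 < r) (hr1 : r < 1) (ha : a ∈ Set.Icc 0 Real.pi) :
    ∫ t in a..Real.pi,
        (1 / Real.pi) * (1 - Real.cos (2 * t)) / (1 + r ^ 2 - 2 * r * Real.cos t)
      = (1 / Real.pi) * ((Real.pi - a) - (1 / r) * Real.sin a
          + ((1 - r ^ 2) / r ^ 2)
            * Real.arctan (r * Real.sin a / (1 - r * Real.cos a))) :=
  sbar_closed_form_general r a hr0 hr1
end

section
/- Let 0 < r < 1 and a ∈ [0,π]. Then the complex-valued integral ∫_{I_R} r·e^{it}/(1 − r·e^{it}) dt, taken over I_R = [−π,−a] ∪ [a,π], equals the real number −2·θ_r, where θ_r = arctan(r·sin a/(1 − r·cos a)). Equivalently, i·( Log(1 − r·e^{−ia}) − Log(1 − r·e^{ia}) ) = −2·θ_r, Log denoting the principal branch of the complex logarithm. -/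
/-!
The integrand is the derivative of `t ↦ i Log(1 - r e^{it})`; the principal branch is smooth
along this path because `1 - r e^{it}` stays in the right half-plane. As `e^{iπ} = e^{-iπ}`,
the integral telescopes to `i (Log(1 - r e^{-ia}) - Log(1 - r e^{ia}))`. Since
`1 - r e^{-ia}` is the conjugate of `z = 1 - r e^{ia}`, this is `2 arg z`, and `arg z` is the
arctangent of `Im z / Re z = -r sin a / (1 - r cos a)`.
-/

open MeasureTheory Complex ComplexConjugate

lemma one_sub_mem_slitPlane_of_norm_lt_one {w : ℂ} (hw : ‖w‖ < 1) : 1 - w ∈ slitPlane := by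
  simpa [sub_eq_add_neg] using mem_slitPlane_of_norm_lt_one (z := -w) (by simpa using hw)

lemma norm_mul_exp_I_mul_ofReal (c : ℂ) (t : ℝ) : ‖c * exp (I * t)‖ = ‖c‖ := by
  rw [norm_mul, norm_exp_I_mul_ofReal, mul_one]

lemma arg_eq_arctan_of_re_pos {z : ℂ} (hz : 0 < z.re) : z.arg = Real.arctan (z.im / z.re) := by
  obtain ⟨hlo, hhi⟩ := abs_lt.mp (abs_arg_lt_pi_div_two_iff.mpr (Or.inl hz))
  rw [← tan_arg, Real.arctan_tan hlo hhi]

lemma I_mul_log_conj_sub_log {z : ℂ} (hz : z.arg ≠ Real.pi) :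
    I * (log (conj z) - log z) = 2 * z.arg := by
  rw [log_conj z hz, ← neg_sub, sub_conj, log_im]
  push_cast
  linear_combination (-2 * (z.arg : ℂ)) * I_sq

lemma hasDerivAt_I_mul_log_one_sub_mul_exp {c : ℂ} (hc : ‖c‖ < 1) (t : ℝ) :
    HasDerivAt (fun s : ℝ => I * log (1 - c * exp (I * s)))
      (c * exp (I * t) / (1 - c * exp (I * t))) t := by
  have hexp : HasDerivAt (fun s : ℝ => exp (I * s)) (exp (I * t) * I) t := by
    simpa using ((ofRealCLM.hasDerivAt (x := t)).const_mul I).cexp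
  have hlog := ((hexp.const_mul c).const_sub 1).clog_real
    (one_sub_mem_slitPlane_of_norm_lt_one ((norm_mul_exp_I_mul_ofReal c t).trans_lt hc))
  refine (hlog.const_mul I).congr_deriv ?_
  rw [← mul_div_assoc]
  congr 1
  linear_combination (-(c * exp (I * t))) * I_sq

lemma setIntegral_Icc_eq_sub_of_hasDerivAt {E : Type*} [NormedAddCommGroup E] [NormedSpace ℝ E]
    [CompleteSpace E] {f F : ℝ → E} (hF : ∀ t, HasDerivAt F (f t) t) (hf : Continuous f)
    {u v : ℝ} (huv : u ≤ v) : ∫ t in Set.Icc u v, f t = F v - F u := by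
  rw [integral_Icc_eq_integral_Ioc, ← intervalIntegral.integral_of_le huv]
  exact intervalIntegral.integral_eq_sub_of_hasDerivAt (fun t _ => hF t) (hf.intervalIntegrable u v)

lemma setIntegral_Icc_union_Icc_eq_sub_of_hasDerivAt {E : Type*} [NormedAddCommGroup E]
    [NormedSpace ℝ E] [CompleteSpace E] {f F : ℝ → E} (hF : ∀ t, HasDerivAt F (f t) t)
    (hf : Continuous f) {b c d e : ℝ} (hbc : b ≤ c) (hcd : c ≤ d) (hde : d ≤ e) :
    ∫ t in Set.Icc b c ∪ Set.Icc d e, f t = (F c - F b) + (F e - F d) := by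
  have hdisj : AEDisjoint volume (Set.Icc b c) (Set.Icc d e) := by
    refine measure_mono_null (t := Set.Icc d c) (fun x hx => ⟨hx.2.1, hx.1.2⟩) ?_
    simpa [Real.volume_Icc] using hcd
  rw [setIntegral_union₀ hdisj measurableSet_Icc.nullMeasurableSet hf.integrableOn_Icc
    hf.integrableOn_Icc, setIntegral_Icc_eq_sub_of_hasDerivAt hF hf hbc,
    setIntegral_Icc_eq_sub_of_hasDerivAt hF hf hde]

lemma I_mul_log_one_sub_mul_exp_neg_sub {r : ℝ} (hr : |r| < 1) (a : ℝ) :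
    I * (log (1 - r * exp (-I * a)) - log (1 - r * exp (I * a)))
      = ((-(2 * Real.arctan (r * Real.sin a / (1 - r * Real.cos a))) : ℝ) : ℂ) := by
  set z : ℂ := 1 - r * exp (I * a)
  have hnorm : ‖(r : ℂ) * exp (I * a)‖ < 1 := by
    rwa [norm_mul_exp_I_mul_ofReal, norm_real, Real.norm_eq_abs]
  have hre : z.re = 1 - r * Real.cos a := by simp [z, exp_re, mul_comm]
  have him : z.im = -(r * Real.sin a) := by simp [z, exp_im, mul_comm]
  have hconj : conj z = 1 - r * exp (-I * a) := by
    simp [z, ← exp_conj]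
  have hre_pos : 0 < z.re := by
    simp only [z, sub_re, one_re]
    linarith [re_le_norm ((r : ℂ) * exp (I * a))]
  rw [← hconj, I_mul_log_conj_sub_log (slitPlane_arg_ne_pi
    (one_sub_mem_slitPlane_of_norm_lt_one hnorm)), arg_eq_arctan_of_re_pos hre_pos, hre, him,
    neg_div, Real.arctan_neg]
  push_cast
  ring

/-- Equation (36) of the paper: for `0 < r < 1` and `a ∈ [0,π]`, the integral of
`r e^{it}/(1 − r e^{it})` over `I_R = [−π,−a] ∪ [a,π]` equals `−2 θ_r`, where
`θ_r = arctan(r sin a / (1 − r cos a))`; equivalently the antiderivative identity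
`i (Log(1 − r e^{−ia}) − Log(1 − r e^{ia})) = −2 θ_r` holds for the principal
branch of the complex logarithm. -/
theorem integral_geometric_kernel_eq_arctan
    (r a : ℝ) (hr0 : 0 < r) (hr1 : r < 1) (ha : a ∈ Set.Icc 0 Real.pi) :
    (∫ t in (Set.Icc (-Real.pi) (-a) ∪ Set.Icc a Real.pi),
        (r : ℂ) * Complex.exp (Complex.I * (t : ℝ))
          / (1 - (r : ℂ) * Complex.exp (Complex.I * (t : ℝ)))
      = ((-(2 * Real.arctan (r * Real.sin a / (1 - r * Real.cos a))) : ℝ) : ℂ)) ∧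
    (Complex.I * (Complex.log (1 - (r : ℂ) * Complex.exp (-Complex.I * (a : ℝ)))
          - Complex.log (1 - (r : ℂ) * Complex.exp (Complex.I * (a : ℝ))))
      = ((-(2 * Real.arctan (r * Real.sin a / (1 - r * Real.cos a))) : ℝ) : ℂ)) := by
  have hr : |r| < 1 := abs_lt.mpr ⟨by linarith, hr1⟩
  have hc : ‖(r : ℂ)‖ < 1 := by rwa [norm_real, Real.norm_eq_abs]
  have hcont : Continuous fun t : ℝ => (r : ℂ) * exp (I * t) / (1 - r * exp (I * t)) :=
    .div (by fun_prop) (by fun_prop) fun t => slitPlane_ne_zero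
      (one_sub_mem_slitPlane_of_norm_lt_one ((norm_mul_exp_I_mul_ofReal _ t).trans_lt hc))
  have hexp_pi : exp (I * (Real.pi : ℝ)) = exp (I * (-Real.pi : ℝ)) := by
    simp [mul_comm I, exp_neg, exp_pi_mul_I]
  refine ⟨?_, I_mul_log_one_sub_mul_exp_neg_sub hr a⟩
  rw [setIntegral_Icc_union_Icc_eq_sub_of_hasDerivAt (hasDerivAt_I_mul_log_one_sub_mul_exp hc)
    hcont (by linarith [ha.2]) (by linarith [ha.1]) ha.2, hexp_pi,
    ← I_mul_log_one_sub_mul_exp_neg_sub hr a]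
  push_cast
  ring_nf
end

section
/- Let 0 < u < 1 and a ∈ [0,π]. Then ∫_{I_R} Log(1 − u·e^{it}) dt = i·( Li₂(u·e^{−ia}) − Li₂(u·e^{ia}) ), where the integral is over I_R = [−π,−a] ∪ [a,π], Log is the principal branch of the complex logarithm, and Li₂ is the dilogarithm. (Identity I₁ used in the proof of Proposition 2.) -/
/-!
Expand `Log (1 - z) = -∑ zⁿ/n` with `z = u e^{it}` and integrate term by term over `I_R`, which is
legitimate since `|z| = u < 1` gives the dominating geometric series `∑ uⁿ`. As `e^{int}` is
`2π`-periodic, `∫_{I_R} e^{int} dt = (e^{-ina} - e^{ina}) / (in)`, so the `n`-th term is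
`i (u e^{-ia})ⁿ/n² - i (u e^{ia})ⁿ/n²`: the two dilogarithm series.
-/

open MeasureTheory Complex

/-- The dilogarithm `Li₂(z) = Σ_{n≥1} zⁿ/n²`, defined for `|z| ≤ 1`. -/
noncomputable def dilog (z : ℂ) : ℂ := ∑' n : ℕ, z ^ (n + 1) / ((n : ℂ) + 1) ^ 2

theorem summable_dilog {z : ℂ} (hz : ‖z‖ ≤ 1) :
    Summable fun n : ℕ => z ^ (n + 1) / ((n : ℂ) + 1) ^ 2 := by
  refine Summable.of_norm_bounded
    ((summable_nat_add_iff 1).2 (Real.summable_one_div_nat_pow.2 one_lt_two)) fun n => ?_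
  rw [norm_div, norm_pow, norm_pow]
  push_cast
  norm_cast
  gcongr
  exact pow_le_one₀ (norm_nonneg z) hz

-- Indexed from `0`: the extra term `z ^ 0 / 0 ^ 2` is `1 / 0 = 0`.
theorem hasSum_dilog {z : ℂ} (hz : ‖z‖ ≤ 1) :
    HasSum (fun n : ℕ => z ^ n / (n : ℂ) ^ 2) (dilog z) := by
  rw [← hasSum_nat_add_iff' 1]
  simpa [dilog] using (summable_dilog hz).hasSum

theorem hasSum_integral_taylorSeries_neg_log {α : Type*} [MeasurableSpace α] {μ : Measure α}
    [IsFiniteMeasure μ] {z : α → ℂ} {r : ℝ} (hz : AEStronglyMeasurable z μ)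
    (hr₀ : 0 ≤ r) (hr₁ : r < 1) (hzr : ∀ x, ‖z x‖ ≤ r) :
    HasSum (fun n : ℕ => ∫ x, z x ^ n / n ∂μ) (∫ x, -log (1 - z x) ∂μ) := by
  refine hasSum_integral_of_dominated_convergence (fun n _ => r ^ n)
    (fun n => by fun_prop) (fun n => .of_forall fun x => ?_)
    (.of_forall fun _ => summable_geometric_of_lt_one hr₀ hr₁) (integrable_const _)
    (.of_forall fun x => hasSum_taylorSeries_neg_log ((hzr x).trans_lt hr₁))
  rw [norm_div, norm_pow, Complex.norm_natCast]
  calc ‖z x‖ ^ n / n ≤ ‖z x‖ ^ n := div_nat_le_self_of_nonnneg (by positivity) n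
    _ ≤ r ^ n := by gcongr; exact hzr x

theorem setIntegral_Icc_neg_union_Icc {E : Type*} [NormedAddCommGroup E] [NormedSpace ℝ E]
    {f : ℝ → E} {a b : ℝ} (ha : 0 ≤ a) (hab : a ≤ b)
    (hf₁ : IntegrableOn f (Set.Icc (-b) (-a))) (hf₂ : IntegrableOn f (Set.Icc a b)) :
    ∫ t in Set.Icc (-b) (-a) ∪ Set.Icc a b, f t = (∫ t in -b..-a, f t) + ∫ t in a..b, f t := by
  rw [setIntegral_union₀ _ measurableSet_Icc.nullMeasurableSet hf₁ hf₂,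
    integral_Icc_eq_integral_Ioc, integral_Icc_eq_integral_Ioc,
    ← intervalIntegral.integral_of_le (by linarith), ← intervalIntegral.integral_of_le hab]
  refine measure_mono_null (fun t ⟨⟨_, ht₁⟩, ht₂, _⟩ => ?_) (Real.volume_singleton (a := 0))
  exact le_antisymm (by linarith) (by linarith)

theorem setIntegral_exp_I_mul_pow {n : ℕ} (hn : n ≠ 0) {a : ℝ} (ha : a ∈ Set.Icc 0 Real.pi) :
    ∫ t in Set.Icc (-Real.pi) (-a) ∪ Set.Icc a Real.pi, exp (I * t) ^ n
      = (exp (-I * a) ^ n - exp (I * a) ^ n) / (n * I) := by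
  have hc : (n : ℂ) * I ≠ 0 := mul_ne_zero (Nat.cast_ne_zero.2 hn) I_ne_zero
  have hcont : Continuous fun t : ℝ => exp (I * t) ^ n := by fun_prop
  rw [setIntegral_Icc_neg_union_Icc ha.1 ha.2 hcont.integrableOn_Icc hcont.integrableOn_Icc]
  simp_rw [← exp_nat_mul, ← mul_assoc]
  rw [integral_exp_mul_complex hc, integral_exp_mul_complex hc]
  -- `exp (n I t)` is `2π`-periodic in `t`, so the contributions of the endpoints `±π` cancel.
  have hπ : exp (n * I * Real.pi) = exp (n * I * (-Real.pi : ℝ)) := by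
    rw [← mul_one (exp (_ * ((-Real.pi : ℝ) : ℂ))), ← exp_nat_mul_two_pi_mul_I n, ← exp_add]
    push_cast
    ring_nf
  rw [hπ]
  push_cast
  ring_nf

theorem setIntegral_ofReal_mul_exp_I_mul_pow_div (u : ℝ) (n : ℕ) {a : ℝ}
    (ha : a ∈ Set.Icc 0 Real.pi) :
    ∫ t in Set.Icc (-Real.pi) (-a) ∪ Set.Icc a Real.pi, ((u : ℂ) * exp (I * t)) ^ n / n
      = -I * (((u : ℂ) * exp (-I * a)) ^ n / (n : ℂ) ^ 2
          - ((u : ℂ) * exp (I * a)) ^ n / (n : ℂ) ^ 2) := by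
  rcases eq_or_ne n 0 with rfl | hn
  · simp
  simp_rw [mul_pow, mul_div_right_comm _ (exp _ ^ n)]
  rw [integral_const_mul, setIntegral_exp_I_mul_pow hn ha]
  field_simp
  ring_nf
  rw [I_sq]
  ring

theorem norm_ofReal_mul_exp_I_mul (u t : ℝ) : ‖(u : ℂ) * exp (I * t)‖ = |u| := by
  rw [norm_mul, Complex.norm_real, Real.norm_eq_abs, mul_comm I, norm_exp_ofReal_mul_I, mul_one]

/-- Identity `I₁` used in the proof of Proposition 2: for `0 < u < 1` and
`a ∈ [0,π]`, `∫_{I_R} Log(1 − u e^{it}) dt = i (Li₂(u e^{−ia}) − Li₂(u e^{ia}))`,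
where `I_R = [−π,−a] ∪ [a,π]` and `Log` is the principal complex logarithm. -/
theorem integral_log_one_sub_exp_eq_dilog
    (u a : ℝ) (hu0 : 0 < u) (hu1 : u < 1) (ha : a ∈ Set.Icc 0 Real.pi) :
    ∫ t in (Set.Icc (-Real.pi) (-a) ∪ Set.Icc a Real.pi),
        Complex.log (1 - (u : ℂ) * Complex.exp (Complex.I * (t : ℝ)))
      = Complex.I * (dilog ((u : ℂ) * Complex.exp (-Complex.I * (a : ℝ)))
          - dilog ((u : ℂ) * Complex.exp (Complex.I * (a : ℝ)))) := by
  have : IsFiniteMeasure (volume.restrict (Set.Icc (-Real.pi) (-a) ∪ Set.Icc a Real.pi)) :=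
    isFiniteMeasure_restrict.2 (measure_union_lt_top measure_Icc_lt_top measure_Icc_lt_top).ne
  have hnorm (s : ℝ) : ‖(u : ℂ) * exp (I * s)‖ = u := by
    rw [norm_ofReal_mul_exp_I_mul, abs_of_pos hu0]
  have hnorm_neg : ‖(u : ℂ) * exp (-I * a)‖ = u := by
    rw [neg_mul, ← mul_neg, ← ofReal_neg, hnorm]
  have hlog := hasSum_integral_taylorSeries_neg_log
    (μ := volume.restrict (Set.Icc (-Real.pi) (-a) ∪ Set.Icc a Real.pi))
    (Continuous.aestronglyMeasurable (by fun_prop)) hu0.le hu1 fun t => (hnorm t).le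
  simp_rw [setIntegral_ofReal_mul_exp_I_mul_pow_div u _ ha] at hlog
  have hdilog := ((hasSum_dilog (hnorm_neg.trans_le hu1.le)).sub
    (hasSum_dilog ((hnorm a).trans_le hu1.le))).mul_left (-I)
  rw [← neg_neg (∫ _ in _, _), ← integral_neg, hlog.unique hdilog]
  ring
end

section
/- Let 0 < r < 1, y = r², and a ∈ [0,π]. Then (1/2)·∫_{I_R} ( r²/(1 + r² − 2r·cos t) )·f_T(t) dt = (1/π)·( (r²/(1 − r²))·(π − a) − ((1 + r²)/(1 − r²))·θ_r + r·sin a/(1 + r² − 2r·cos a) ), where the integral is over I_R = [−π,−a] ∪ [a,π], f_T(t) = (1/π)·(1 − cos(2t))/(1 + r² − 2r·cos t), and θ_r = arctan(r·sin a/(1 − r·cos a)). (Core integral identity of Proposition 4, case y < 1, evaluating the average water-filling power.) -/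
/-!
Since `1 - cos 2t = 2 sin² t`, the integrand is `π⁻¹ · 2r² sin² t / (1 + r² - 2r cos t)²`. It is
even, so the integral over `[-π, -a] ∪ [a, π]` is twice the integral over `[a, π]`, which is
computed from an elementary antiderivative. Its transcendental part is
`arctan (r sin t / (1 - r cos t)) = arg (1 - r e^{-it})`, with derivative
`(r cos t - r²) / (1 + r² - 2r cos t)`; for `|r| < 1` it is smooth in `t` and vanishes at `t = π`.
-/

open MeasureTheory Real Set

theorem integral_Icc_neg_union_Icc_of_even {g : ℝ → ℝ} (hg : Continuous g)
    (heven : ∀ t, g (-t) = g t) {a b : ℝ} (ha : 0 ≤ a) (hab : a ≤ b) :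
    ∫ t in Icc (-b) (-a) ∪ Icc a b, g t = 2 * ∫ t in a..b, g t := by
  have hdisj : AEDisjoint volume (Icc (-b) (-a)) (Icc a b) := by
    refine measure_mono_null (t := Icc a (-a)) (fun x ⟨⟨_, hxa⟩, hax, _⟩ => ⟨hax, hxa⟩) ?_
    rw [volume_Icc, ENNReal.ofReal_eq_zero]
    linarith
  have hneg : ∫ t in (-b)..(-a), g t = ∫ t in a..b, g t := by
    simpa only [heven] using (intervalIntegral.integral_comp_neg (a := a) (b := b) g).symm
  rw [setIntegral_union₀ hdisj measurableSet_Icc.nullMeasurableSet hg.integrableOn_Icc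
      hg.integrableOn_Icc, integral_Icc_eq_integral_Ioc, integral_Icc_eq_integral_Ioc,
    ← intervalIntegral.integral_of_le (by linarith), ← intervalIntegral.integral_of_le hab,
    hneg, two_mul]

theorem one_sub_mul_cos_pos {r : ℝ} (hr : |r| < 1) (t : ℝ) : 0 < 1 - r * cos t := by
  have := abs_mul r (cos t) ▸ le_abs_self (r * cos t)
  nlinarith [abs_cos_le_one t, abs_nonneg r]

theorem one_add_sq_sub_two_mul_cos_eq (r t : ℝ) :
    1 + r ^ 2 - 2 * r * cos t = (1 - r * cos t) ^ 2 + (r * sin t) ^ 2 := by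
  linear_combination -r ^ 2 * sin_sq_add_cos_sq t

theorem one_add_sq_sub_two_mul_cos_pos {r : ℝ} (hr : |r| < 1) (t : ℝ) :
    0 < 1 + r ^ 2 - 2 * r * cos t := by
  rw [one_add_sq_sub_two_mul_cos_eq]
  have := one_sub_mul_cos_pos hr t
  positivity

theorem hasDerivAt_arctan_mul_sin_div {r t : ℝ} (h : 1 - r * cos t ≠ 0) :
    HasDerivAt (fun t => arctan (r * sin t / (1 - r * cos t)))
      ((r * cos t - r ^ 2) / (1 + r ^ 2 - 2 * r * cos t)) t := by
  have hquot : HasDerivAt (fun t => r * sin t / (1 - r * cos t))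
      ((r * cos t * (1 - r * cos t) - r * sin t * -(r * -sin t)) / (1 - r * cos t) ^ 2) t :=
    ((hasDerivAt_sin t).const_mul r).div (((hasDerivAt_cos t).const_mul r).const_sub 1) h
  refine ((hasDerivAt_arctan _).comp t hquot).congr_deriv ?_
  rw [one_add_sq_sub_two_mul_cos_eq]
  field_simp
  linear_combination -r ^ 2 * sin_sq_add_cos_sq t

theorem hasDerivAt_mul_sin_div {r t : ℝ} (h : 1 + r ^ 2 - 2 * r * cos t ≠ 0) :
    HasDerivAt (fun t => r * sin t / (1 + r ^ 2 - 2 * r * cos t))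
      ((r * cos t * (1 + r ^ 2 - 2 * r * cos t) - 2 * r ^ 2 * sin t ^ 2)
        / (1 + r ^ 2 - 2 * r * cos t) ^ 2) t :=
  (((hasDerivAt_sin t).const_mul r).div
    (((hasDerivAt_cos t).const_mul (2 * r)).const_sub (1 + r ^ 2)) h).congr_deriv (by ring)

noncomputable def waterfillingAntideriv (r t : ℝ) : ℝ :=
  r ^ 2 / (1 - r ^ 2) * t + (1 + r ^ 2) / (1 - r ^ 2) * arctan (r * sin t / (1 - r * cos t))
    - r * sin t / (1 + r ^ 2 - 2 * r * cos t)

theorem hasDerivAt_waterfillingAntideriv {r : ℝ} (hr : |r| < 1) (t : ℝ) :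
    HasDerivAt (waterfillingAntideriv r)
      (2 * r ^ 2 * sin t ^ 2 / (1 + r ^ 2 - 2 * r * cos t) ^ 2) t := by
  have hD := (one_add_sq_sub_two_mul_cos_pos hr t).ne'
  have hr2 : 1 - r ^ 2 ≠ 0 := by nlinarith [abs_lt.mp hr]
  refine ((((hasDerivAt_id t).const_mul _).add
    ((hasDerivAt_arctan_mul_sin_div (one_sub_mul_cos_pos hr t).ne').const_mul _)).sub
    (hasDerivAt_mul_sin_div hD)).congr_deriv ?_
  rw [sin_sq]
  set D := 1 + r ^ 2 - 2 * r * cos t with hDdef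
  field_simp
  rw [hDdef]
  ring

/-- Core integral identity of Proposition 4 (case `y = r² < 1`), evaluating the
average water-filling power:
`(1/2)∫_{I_R} (r²/(1 + r² − 2r cos t)) f_T(t) dt`
`= (1/π)( (r²/(1−r²))(π − a) − ((1+r²)/(1−r²)) θ_r + r sin a/(1 + r² − 2r cos a) )`,
where `I_R = [−π,−a] ∪ [a,π]`, `f_T(t) = (1/π)(1 − cos 2t)/(1 + r² − 2r cos t)` and
`θ_r = arctan(r sin a / (1 − r cos a))`. -/
theorem waterfilling_power_integral_closed_form
    (r a : ℝ) (hr0 : 0 < r) (hr1 : r < 1) (ha : a ∈ Set.Icc 0 Real.pi) :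
    (1 / 2) * ∫ t in (Set.Icc (-Real.pi) (-a) ∪ Set.Icc a Real.pi),
        (r ^ 2 / (1 + r ^ 2 - 2 * r * Real.cos t))
          * ((1 / Real.pi) * (1 - Real.cos (2 * t)) / (1 + r ^ 2 - 2 * r * Real.cos t))
      = (1 / Real.pi) * ((r ^ 2 / (1 - r ^ 2)) * (Real.pi - a)
          - ((1 + r ^ 2) / (1 - r ^ 2))
              * Real.arctan (r * Real.sin a / (1 - r * Real.cos a))
          + r * Real.sin a / (1 + r ^ 2 - 2 * r * Real.cos a)) := by
  obtain ⟨ha0, haπ⟩ := ha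
  have hr : |r| < 1 := abs_lt.mpr ⟨by linarith, hr1⟩
  have hintegrand : ∀ t, r ^ 2 / (1 + r ^ 2 - 2 * r * cos t)
      * ((1 / π) * (1 - cos (2 * t)) / (1 + r ^ 2 - 2 * r * cos t))
      = π⁻¹ * (2 * r ^ 2 * sin t ^ 2 / (1 + r ^ 2 - 2 * r * cos t) ^ 2) := by
    intro t
    have hD := (one_add_sq_sub_two_mul_cos_pos hr t).ne'
    rw [cos_two_mul, cos_sq']
    field_simp
    ring
  have hcont : Continuous fun t => 2 * r ^ 2 * sin t ^ 2 / (1 + r ^ 2 - 2 * r * cos t) ^ 2 :=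
    .div (by fun_prop) (by fun_prop) fun t => (pow_pos (one_add_sq_sub_two_mul_cos_pos hr t) 2).ne'
  simp_rw [hintegrand]
  rw [integral_Icc_neg_union_Icc_of_even (by fun_prop) (by simp) ha0 haπ,
    intervalIntegral.integral_const_mul, intervalIntegral.integral_eq_sub_of_hasDerivAt
      (fun t _ => hasDerivAt_waterfillingAntideriv hr t) (hcont.intervalIntegrable _ _)]
  have hr2 : 1 - r ^ 2 ≠ 0 := by nlinarith
  simp only [waterfillingAntideriv, sin_pi, cos_pi, mul_zero, zero_div, arctan_zero]
  field_simp
  ring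
end

section
/- Let 1 ≤ s ≤ L_T, let B be a finite nonempty set of L_T×s complex matrices Q satisfying Q†Q = I_s, and let ν be a probability measure on ℂ^{L_T×s} concentrated on {V : V†V = I_s} and invariant under the map V ↦ V·U for every s×s unitary matrix U. Let φ̂ be a measurable map from ℂ^{L_T×s} to B such that φ̂(V·U) = φ̂(V) for every s×s unitary matrix U (for instance, a consistent selection of a maximizer of tr((V†Q)(V†Q)†) over Q ∈ B). Then E_ν[ V† Q_{φ̂(V)} Q_{φ̂(V)}† V ] = μ·I_s, where μ = 1 − (1/s)·E_ν[ d_c²(Q_{φ̂(V)}, V) ] is a nonnegative real constant. (Theorem 4.) -/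
/-!
Right-multiplying `V` by a unitary `U` does not change the selected codeword, so the random
matrix `G(V) = (V† Q_φ(V)) (V† Q_φ(V))†` satisfies `G(V U) = U† G(V) U`; as `ν` is invariant under
`V ↦ V U`, the expectation `E = E_ν[G]` satisfies `E = U† E U`, i.e. it commutes with every
unitary. Commuting with the reflections `1 - 2 E_kk` and with the transposition matrices forces
`E` to be a scalar `c • 1`. Taking traces, `s c = E_ν[tr G] = s - E_ν[d_c²]`, and `tr G ≥ 0`
because `G` is positive semidefinite.
-/

open MeasureTheory Matrix

/-- Matrices inherit the product measurable structure of functions. -/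
instance matrixMeasurableSpace {m n α : Type*} [MeasurableSpace α] :
    MeasurableSpace (Matrix m n α) :=
  (inferInstance : MeasurableSpace (m → n → α))

namespace Matrix

variable {l m n p X 𝕜 : Type*}

theorem commute_of_conjTranspose_mul_mul_eq [Fintype n] [DecidableEq n] [CommRing 𝕜]
    [StarRing 𝕜] {U M : Matrix n n 𝕜} (hU : Uᴴ * U = 1) (hM : Uᴴ * M * U = M) :
    Commute U M := by
  have hU' : U * Uᴴ = 1 := mul_eq_one_comm.mp hU
  calc U * M = U * (Uᴴ * M * U) := by rw [hM]
    _ = M * U := by simp only [← Matrix.mul_assoc, hU', Matrix.one_mul]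

section Scalar

variable [Fintype n] [DecidableEq n] [Field 𝕜] [StarRing 𝕜] [NeZero (2 : 𝕜)]

theorem commute_single_self_of_forall_unitary {M : Matrix n n 𝕜}
    (hM : ∀ U : Matrix n n 𝕜, Uᴴ * U = 1 → Commute U M) (k : n) :
    Commute (single k k 1) M := by
  set D : Matrix n n 𝕜 := 1 - (2 : 𝕜) • single k k 1
  have hD : Dᴴ * D = 1 := by
    have hS : single k k (1 : 𝕜) * single k k 1 = single k k 1 := by simp
    simp only [D, conjTranspose_sub, conjTranspose_one, conjTranspose_smul, conjTranspose_single,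
      star_one, star_ofNat, sub_mul, mul_sub, one_mul, mul_one, Matrix.smul_mul,
      Matrix.mul_smul, smul_smul, hS]
    module
  have h2 : Commute ((2 : 𝕜) • single k k 1) M := by
    simpa [D] using (Commute.one_left M).sub_left (hM D hD)
  have := h2.smul_left (2⁻¹ : 𝕜)
  rwa [smul_smul, inv_mul_cancel₀ two_ne_zero, one_smul] at this

theorem mem_range_scalar_of_forall_unitary_commute {M : Matrix n n 𝕜}
    (hM : ∀ U : Matrix n n 𝕜, Uᴴ * U = 1 → Commute U M) :
    M ∈ Set.range (scalar n) := by
  refine mem_range_scalar_of_commute_single fun i j hij => ?_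
  set P : Matrix n n 𝕜 := (Equiv.swap i j).permMatrix 𝕜
  have hP : Pᴴ * P = 1 := by simp [P, ← permMatrix_mul]
  have hsingle : single i j (1 : 𝕜) = single i i 1 * P * single j j 1 := by
    simp [P, single_mul_mul_single]
  rw [hsingle]
  exact ((commute_single_self_of_forall_unitary hM i).mul_left (hM P hP)).mul_left
    (commute_single_self_of_forall_unitary hM j)

end Scalar

theorem norm_mul_apply_le [Fintype m] [NonUnitalSeminormedRing 𝕜] {A : Matrix l m 𝕜}
    {B : Matrix m n 𝕜} {a b : ℝ} (hA : ∀ i k, ‖A i k‖ ≤ a) (hB : ∀ k j, ‖B k j‖ ≤ b)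
    (i : l) (j : n) : ‖(A * B) i j‖ ≤ Fintype.card m * (a * b) := by
  calc ‖(A * B) i j‖ ≤ ∑ k, ‖A i k‖ * ‖B k j‖ :=
        (norm_sum_le _ _).trans (Finset.sum_le_sum fun k _ => norm_mul_le _ _)
    _ ≤ ∑ _k : m, a * b := Finset.sum_le_sum fun k _ =>
        mul_le_mul (hA i k) (hB k j) (norm_nonneg _) ((norm_nonneg _).trans (hA i k))
    _ = Fintype.card m * (a * b) := by simp

section RCLike

variable [RCLike 𝕜]

theorem norm_apply_le_one_of_conjTranspose_mul_self_eq_one [Fintype m] [DecidableEq n]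
    {W : Matrix m n 𝕜} (hW : Wᴴ * W = 1) (a : m) (i : n) : ‖W a i‖ ≤ 1 := by
  have hcol : ∑ b, ‖W b i‖ ^ 2 = 1 := by
    have := congrFun (congrFun hW i) i
    simp only [mul_apply, conjTranspose_apply, one_apply_eq, RCLike.star_def,
      RCLike.conj_mul] at this
    exact_mod_cast this
  have : ‖W a i‖ ^ 2 ≤ 1 :=
    hcol ▸ Finset.single_le_sum (f := fun b => ‖W b i‖ ^ 2) (fun _ _ => by positivity)
      (Finset.mem_univ a)
  exact (sq_le_one_iff₀ (norm_nonneg _)).mp this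

theorem norm_conjTranspose_mul_apply_le_card [Fintype m] [DecidableEq n] {W Q : Matrix m n 𝕜}
    (hW : Wᴴ * W = 1) (hQ : Qᴴ * Q = 1) (i j : n) : ‖(Wᴴ * Q) i j‖ ≤ Fintype.card m := by
  refine (norm_mul_apply_le (a := 1) (fun i a => ?_)
    (norm_apply_le_one_of_conjTranspose_mul_self_eq_one hQ) i j).trans_eq (by ring)
  rw [conjTranspose_apply, norm_star]
  exact norm_apply_le_one_of_conjTranspose_mul_self_eq_one hW a i

theorem norm_mul_conjTranspose_self_apply_le [Fintype n] {A : Matrix m n 𝕜} {a : ℝ}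
    (hA : ∀ i k, ‖A i k‖ ≤ a) (i j : m) : ‖(A * Aᴴ) i j‖ ≤ Fintype.card n * (a * a) :=
  norm_mul_apply_le hA (fun k j => by rw [conjTranspose_apply, norm_star]; exact hA j k) i j

open scoped ComplexOrder in
theorem ofReal_re_trace_mul_conjTranspose_self [Fintype m] [Fintype n] (A : Matrix m n 𝕜) :
    ((RCLike.re (A * Aᴴ).trace : ℝ) : 𝕜) = (A * Aᴴ).trace := by
  have := (RCLike.nonneg_iff.mp (posSemidef_self_mul_conjTranspose A).trace_nonneg).2
  exact RCLike.ext (by simp) (by simp [this])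

open scoped ComplexOrder in
theorem re_trace_mul_conjTranspose_self_nonneg [Fintype m] [Fintype n] (A : Matrix m n 𝕜) :
    0 ≤ RCLike.re (A * Aᴴ).trace :=
  (RCLike.nonneg_iff.mp (posSemidef_self_mul_conjTranspose A).trace_nonneg).1

end RCLike

section Measurable

variable [MeasurableSpace X] [MeasurableSpace 𝕜]

theorem measurable_apply (i : m) (j : n) : Measurable fun M : Matrix m n 𝕜 => M i j :=
  (measurable_pi_apply j).comp (measurable_pi_apply i)

theorem _root_.Measurable.matrix_mul [Fintype m] [NonUnitalNonAssocSemiring 𝕜]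
    [MeasurableMul₂ 𝕜] [MeasurableAdd₂ 𝕜] {F : X → Matrix l m 𝕜} {G : X → Matrix m n 𝕜}
    (hF : Measurable F) (hG : Measurable G) : Measurable fun x => F x * G x :=
  measurable_pi_lambda _ fun i => measurable_pi_lambda _ fun j =>
    Finset.measurable_sum _ fun k _ =>
      ((measurable_apply i k).comp hF).mul ((measurable_apply k j).comp hG)

theorem _root_.Measurable.matrix_conjTranspose [Star 𝕜] [TopologicalSpace 𝕜] [ContinuousStar 𝕜]
    [BorelSpace 𝕜] {F : X → Matrix m n 𝕜} (hF : Measurable F) :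
    Measurable fun x => (F x)ᴴ :=
  measurable_pi_lambda _ fun j => measurable_pi_lambda _ fun i =>
    continuous_star.measurable.comp ((measurable_apply i j).comp hF)

end Measurable

section Integral

variable [MeasurableSpace X] {μ : Measure X} [RCLike 𝕜]

theorem integral_mul_mul_apply [Fintype m] [Fintype n] {F : X → Matrix m n 𝕜}
    (hF : ∀ i j, Integrable (fun x => F x i j) μ) (A : Matrix l m 𝕜) (B : Matrix n p 𝕜)
    (i : l) (j : p) :
    ∫ x, (A * F x * B) i j ∂μ = (A * of (fun k k' => ∫ x, F x k k' ∂μ) * B) i j := by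
  have hterm : ∀ k k', Integrable (fun x => A i k * F x k k' * B k' j) μ := fun k k' =>
    ((hF k k').const_mul (A i k)).mul_const (B k' j)
  simp only [mul_apply, of_apply, Finset.sum_mul]
  rw [integral_finsetSum _ fun k' _ => integrable_finsetSum _ fun k _ => hterm k k']
  refine Finset.sum_congr rfl fun k' _ => ?_
  rw [integral_finsetSum _ fun k _ => hterm k k']
  simp only [integral_mul_const, integral_const_mul]

theorem integral_trace [Fintype n] {F : X → Matrix n n 𝕜}
    (hF : ∀ i, Integrable (fun x => F x i i) μ) :
    ∫ x, trace (F x) ∂μ = trace (of fun i j => ∫ x, F x i j ∂μ) := by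
  simp only [trace, diag_apply, of_apply]
  exact integral_finsetSum _ fun i _ => hF i

theorem of_integral_eq_mul_mul_of_map_eq [Fintype m] [Fintype n] {T : X → X}
    (hT : Measurable T) (hμ : μ.map T = μ) {F : X → Matrix m n 𝕜}
    (hF : ∀ i j, Integrable (fun x => F x i j) μ) {A : Matrix m m 𝕜} {B : Matrix n n 𝕜}
    (hFT : ∀ x, F (T x) = A * F x * B) :
    of (fun i j => ∫ x, F x i j ∂μ) = A * of (fun i j => ∫ x, F x i j ∂μ) * B := by
  ext i j
  calc ∫ x, F x i j ∂μ = ∫ x, F (T x) i j ∂μ := by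
        conv_lhs => rw [← hμ]
        exact integral_map hT.aemeasurable (hμ.symm ▸ (hF i j).aestronglyMeasurable)
    _ = _ := by simp only [hFT]; exact integral_mul_mul_apply hF A B i j

theorem integral_mem_range_scalar_of_unitary_covariant [Fintype n] [DecidableEq n]
    {F : X → Matrix n n 𝕜} (hF : ∀ i j, Integrable (fun x => F x i j) μ)
    (T : Matrix n n 𝕜 → X → X) (hT : ∀ U, Measurable (T U))
    (hμ : ∀ U : Matrix n n 𝕜, Uᴴ * U = 1 → μ.map (T U) = μ)
    (hFT : ∀ U : Matrix n n 𝕜, Uᴴ * U = 1 → ∀ x, F (T U x) = Uᴴ * F x * U) :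
    of (fun i j => ∫ x, F x i j ∂μ) ∈ Set.range (scalar n) :=
  mem_range_scalar_of_forall_unitary_commute fun U hU => commute_of_conjTranspose_mul_mul_eq hU
    (of_integral_eq_mul_mul_of_map_eq (hT U) (hμ U hU) hF (hFT U hU)).symm

end Integral

theorem integrable_conjTranspose_mul_mul_conjTranspose_apply [Fintype m] [Fintype n]
    [DecidableEq n] [RCLike 𝕜] {ν : Measure (Matrix m n 𝕜)} [IsFiniteMeasure ν]
    {φ : Matrix m n 𝕜 → Matrix m n 𝕜} (hφ : Measurable φ) (hφQ : ∀ V, (φ V)ᴴ * φ V = 1)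
    (hν : ∀ᵐ V ∂ν, Vᴴ * V = 1) (i j : n) :
    Integrable (fun V => (Vᴴ * φ V * (Vᴴ * φ V)ᴴ) i j) ν := by
  have hA : Measurable fun V : Matrix m n 𝕜 => Vᴴ * φ V :=
    measurable_id.matrix_conjTranspose.matrix_mul hφ
  refine Integrable.of_bound
    ((measurable_apply i j).comp (hA.matrix_mul hA.matrix_conjTranspose)).aestronglyMeasurable
    (Fintype.card n * (Fintype.card m * Fintype.card m)) ?_
  filter_upwards [hν] with V hV
  exact norm_mul_conjTranspose_self_apply_le (norm_conjTranspose_mul_apply_le_card hV (hφQ V)) i j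

end Matrix

theorem expectation_selected_codeword_is_scalar_general
    (LT s : ℕ) (hs : 1 ≤ s)
    (B : Finset (Matrix (Fin LT) (Fin s) ℂ))
    (hB : ∀ Q ∈ B, Qᴴ * Q = 1)
    (ν : Measure (Matrix (Fin LT) (Fin s) ℂ)) [IsProbabilityMeasure ν]
    (hstiefel : ∀ᵐ V ∂ν, Vᴴ * V = 1)
    (hinv : ∀ U : Matrix (Fin s) (Fin s) ℂ, Uᴴ * U = 1 →
      Measure.map (fun V => V * U) ν = ν)
    (φ : Matrix (Fin LT) (Fin s) ℂ → Matrix (Fin LT) (Fin s) ℂ)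
    (hφmeas : Measurable φ) (hφB : ∀ V, φ V ∈ B)
    (hφinv : ∀ V, ∀ U : Matrix (Fin s) (Fin s) ℂ, Uᴴ * U = 1 → φ (V * U) = φ V) :
    ∃ μ : ℝ, 0 ≤ μ ∧
      μ = 1 - (1 / (s : ℝ))
            * ∫ V, ((s : ℝ) - (((Vᴴ * φ V) * (Vᴴ * φ V)ᴴ).trace).re) ∂ν ∧
      Matrix.of (fun i j : Fin s => ∫ V, (Vᴴ * φ V * (φ V)ᴴ * V) i j ∂ν)
        = (μ : ℂ) • (1 : Matrix (Fin s) (Fin s) ℂ) := by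
  set G : Matrix (Fin LT) (Fin s) ℂ → Matrix (Fin s) (Fin s) ℂ :=
    fun V => (Vᴴ * φ V) * (Vᴴ * φ V)ᴴ
  have hG_eq : ∀ V, Vᴴ * φ V * (φ V)ᴴ * V = G V := fun V => by
    simp [G, conjTranspose_mul, Matrix.mul_assoc]
  simp only [hG_eq]
  have hG_int : ∀ i j, Integrable (fun V => G V i j) ν :=
    integrable_conjTranspose_mul_mul_conjTranspose_apply hφmeas (fun V => hB _ (hφB V)) hstiefel
  obtain ⟨c, hc⟩ := integral_mem_range_scalar_of_unitary_covariant hG_int (fun U V => V * U)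
    (fun _ => measurable_id.matrix_mul measurable_const) hinv
    (fun U hU V => by simp [G, hφinv V U hU, conjTranspose_mul, Matrix.mul_assoc])
  set τ := ∫ V, (trace (G V)).re ∂ν
  have hτ : (τ : ℂ) = s * c := by
    calc (τ : ℂ) = ∫ V, ((trace (G V)).re : ℂ) ∂ν := integral_ofReal.symm
      _ = ∫ V, trace (G V) ∂ν :=
          integral_congr_ae (.of_forall fun V => ofReal_re_trace_mul_conjTranspose_self _)
      _ = s * c := by rw [integral_trace fun i => hG_int i i, ← hc]; simp
  have hs0 : (s : ℝ) ≠ 0 := Nat.cast_ne_zero.mpr (Nat.one_le_iff_ne_zero.mp hs)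
  refine ⟨τ / s, div_nonneg (integral_nonneg fun V =>
    re_trace_mul_conjTranspose_self_nonneg (Vᴴ * φ V)) s.cast_nonneg, ?_, ?_⟩
  · have hτ_int : Integrable (fun V => (trace (G V)).re) ν :=
      (integrable_finsetSum _ fun i _ => hG_int i i).re
    rw [integral_sub (integrable_const _) hτ_int]
    field_simp
    simp [τ]
  · rw [← hc, smul_one_eq_diagonal, scalar_apply]
    push_cast
    rw [hτ, mul_div_cancel_left₀ _ (by exact_mod_cast hs0)]

/-- Theorem 4: let `B` be a single rank beamforming codebook of `L_T × s` matrices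
with orthonormal columns, `ν` a probability measure concentrated on the Stiefel
manifold and invariant under right multiplication by `s × s` unitary matrices, and
`φ` a measurable, right-unitary-invariant selection of a codeword (e.g. a chordal
distance minimizer).  Then `E_ν[V† Q_{φ(V)} Q_{φ(V)}† V] = μ·I_s`, where
`μ = 1 − (1/s)·E_ν[d_c²(Q_{φ(V)}, V)]` is a nonnegative real constant. -/
theorem expectation_selected_codeword_is_scalar
    (LT s : ℕ) (hs : 1 ≤ s) (hsLT : s ≤ LT)
    (B : Finset (Matrix (Fin LT) (Fin s) ℂ)) (hBne : B.Nonempty)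
    (hB : ∀ Q ∈ B, Qᴴ * Q = 1)
    (ν : Measure (Matrix (Fin LT) (Fin s) ℂ)) [IsProbabilityMeasure ν]
    (hstiefel : ∀ᵐ V ∂ν, Vᴴ * V = 1)
    (hinv : ∀ U : Matrix (Fin s) (Fin s) ℂ, Uᴴ * U = 1 →
      Measure.map (fun V => V * U) ν = ν)
    (φ : Matrix (Fin LT) (Fin s) ℂ → Matrix (Fin LT) (Fin s) ℂ)
    (hφmeas : Measurable φ) (hφB : ∀ V, φ V ∈ B)
    (hφinv : ∀ V, ∀ U : Matrix (Fin s) (Fin s) ℂ, Uᴴ * U = 1 → φ (V * U) = φ V) :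
    ∃ μ : ℝ, 0 ≤ μ ∧
      μ = 1 - (1 / (s : ℝ))
            * ∫ V, ((s : ℝ) - (((Vᴴ * φ V) * (Vᴴ * φ V)ᴴ).trace).re) ∂ν ∧
      Matrix.of (fun i j : Fin s => ∫ V, (Vᴴ * φ V * (φ V)ᴴ * V) i j ∂ν)
        = (μ : ℂ) • (1 : Matrix (Fin s) (Fin s) ℂ) :=
  expectation_selected_codeword_is_scalar_general LT s hs B hB ν hstiefel hinv φ hφmeas hφB hφinv
end

section
/- For every channel matrix H ∈ ℂ^{L_R×L_T} and every integer t with t > s̃(H) and B_t ≠ ∅, one has I_t(H) − I_{s̃(H)}(H) < (t − s̃(H))·κ. (Lemma used in the proof of Theorem 6.) -/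
/-!
Put `g s = I_s(H) - s κ`. The condition defining `s̃(H)` says exactly that `s` is a weak running
record of `g` along the ranks with a nonempty sub-code, so `s̃(H)` is the last such record. If some
later rank `t` had `g t ≥ g s̃(H)`, the least such `t` would again be a record, beyond the last one.
-/

open MeasureTheory Matrix

/-- The mutual information `ln det(I + P·H Q Q† H†)` achieved by the beamforming
matrix `Q` on the channel `H` with per-beam power `P` (the determinant of such a
positive definite Hermitian matrix is a positive real, so we take its real part). -/
noncomputable def mutInfo (LR LT : ℕ) (P : ℝ) (H : Matrix (Fin LR) (Fin LT) ℂ)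
    {s : ℕ} (Q : Matrix (Fin LT) (Fin s) ℂ) : ℝ :=
  Real.log ((1 + (P : ℂ) • (H * Q * Qᴴ * Hᴴ)).det.re)

/-- `Iinfo LR LT P B s H` is `I_s(H)`, the largest mutual information achievable by
the rank-`s` sub-code `B s` of a multi-rank beamforming codebook (it is `0` when
the sub-code is empty; note that for `s = 0` the unique `L_T × 0` matrix gives
`I_0(H) = ln det(I) = 0`, matching the 'transmitter off' convention). -/
noncomputable def Iinfo (LR LT : ℕ) (P : ℝ)
    (B : (s : ℕ) → Finset (Matrix (Fin LT) (Fin s) ℂ))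
    (s : ℕ) (H : Matrix (Fin LR) (Fin LT) ℂ) : ℝ :=
  if h : (B s).Nonempty then (B s).sup' h (fun Q => mutInfo LR LT P H Q) else 0

/-- `stilde LR LT P κ B H` is the optimal number of on-beams `s̃(H)`: the largest
`s` with `B s ≠ ∅` such that `I_s(H) − I_t(H) ≥ (s − t)·κ` for every `t < s` with
`B t ≠ ∅`. -/
noncomputable def stilde (LR LT : ℕ) (P κ : ℝ)
    (B : (s : ℕ) → Finset (Matrix (Fin LT) (Fin s) ℂ))
    (H : Matrix (Fin LR) (Fin LT) ℂ) : ℕ :=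
  sSup {s : ℕ | (B s).Nonempty ∧ ∀ t < s, (B t).Nonempty →
    ((s : ℝ) - (t : ℝ)) * κ ≤ Iinfo LR LT P B s H - Iinfo LR LT P B t H}

def IsRecordOn {β : Type*} [LinearOrder β] (A : Set ℕ) (g : ℕ → β) (s : ℕ) : Prop :=
  s ∈ A ∧ ∀ u < s, u ∈ A → g u ≤ g s

section Records

variable {β : Type*} [LinearOrder β] {A : Set ℕ} {g : ℕ → β}

theorem isRecordOn_sInf (hA : A.Nonempty) : IsRecordOn A g (sInf A) :=
  ⟨Nat.sInf_mem hA, fun _ hu huA => absurd huA (Nat.notMem_of_lt_sInf hu)⟩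

theorem IsRecordOn.exists_gt_of_le {m t : ℕ} (hm : IsRecordOn A g m) (ht : t ∈ A) (hmt : m < t)
    (hle : g m ≤ g t) : ∃ s, IsRecordOn A g s ∧ m < s := by
  set T := {t | t ∈ A ∧ m < t ∧ g m ≤ g t}
  obtain ⟨hsA, hms, hgs⟩ : sInf T ∈ T := Nat.sInf_mem ⟨t, ht, hmt, hle⟩
  refine ⟨sInf T, ⟨hsA, fun u hu huA => ?_⟩, hms⟩
  rcases lt_trichotomy u m with hum | rfl | hmu
  · exact (hm.2 u hum huA).trans hgs
  · exact hgs
  · have hgu : ¬ g m ≤ g u := fun h => Nat.notMem_of_lt_sInf hu ⟨huA, hmu, h⟩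
    exact (not_le.1 hgu).le.trans hgs

theorem lt_apply_sSup_setOf_isRecordOn (hbdd : BddAbove {s | IsRecordOn A g s}) {t : ℕ}
    (ht : t ∈ A) (hlt : sSup {s | IsRecordOn A g s} < t) :
    g t < g (sSup {s | IsRecordOn A g s}) := by
  have hlast : IsRecordOn A g (sSup {s | IsRecordOn A g s}) :=
    Nat.sSup_mem ⟨sInf A, isRecordOn_sInf ⟨t, ht⟩⟩ hbdd
  by_contra! hle
  obtain ⟨s, hs, hlt'⟩ := hlast.exists_gt_of_le ht hlt hle
  exact (le_csSup hbdd hs).not_gt hlt'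

end Records

theorem stilde_eq_sSup_setOf_isRecordOn (LR LT : ℕ) (P κ : ℝ)
    (B : (s : ℕ) → Finset (Matrix (Fin LT) (Fin s) ℂ)) (H : Matrix (Fin LR) (Fin LT) ℂ) :
    stilde LR LT P κ B H = sSup {s | IsRecordOn {s | (B s).Nonempty}
      (fun s => Iinfo LR LT P B s H - s * κ) s} := by
  have hiff (s t : ℕ) : ((s : ℝ) - t) * κ ≤ Iinfo LR LT P B s H - Iinfo LR LT P B t H ↔
      Iinfo LR LT P B t H - t * κ ≤ Iinfo LR LT P B s H - s * κ := by
    constructor <;> intro h <;> linarith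
  simp only [stilde, IsRecordOn, Set.mem_ofPred_eq, hiff]

theorem stilde_marginal_rate_lt_general
    (LR LT : ℕ) (P κ : ℝ)
    (B : (s : ℕ) → Finset (Matrix (Fin LT) (Fin s) ℂ))
    (hBtop : ∀ s, LT < s → B s = ∅)
    (H : Matrix (Fin LR) (Fin LT) ℂ)
    (t : ℕ) (ht : stilde LR LT P κ B H < t) (hBt : (B t).Nonempty) :
    Iinfo LR LT P B t H - Iinfo LR LT P B (stilde LR LT P κ B H) H
      < ((t : ℝ) - (stilde LR LT P κ B H : ℝ)) * κ := by
  have hbdd : BddAbove {s | IsRecordOn {s | (B s).Nonempty}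
      (fun s => Iinfo LR LT P B s H - s * κ) s} :=
    ⟨LT, fun s hs => not_lt.1 fun hs' => Finset.nonempty_iff_ne_empty.1 hs.1 (hBtop s hs')⟩
  have hlast := lt_apply_sSup_setOf_isRecordOn hbdd hBt
    (by rwa [← stilde_eq_sSup_setOf_isRecordOn])
  rw [← stilde_eq_sSup_setOf_isRecordOn] at hlast
  linarith

/-- Lemma 3 (used in the proof of Theorem 6): for every channel realization `H`
and every `t > s̃(H)` whose sub-code `B t` is nonempty, one has
`I_t(H) − I_{s̃(H)}(H) < (t − s̃(H))·κ`. -/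
theorem stilde_marginal_rate_lt
    (LR LT : ℕ) (hLR : 0 < LR) (hLT : 0 < LT) (P κ : ℝ) (hP : 0 < P)
    (B : (s : ℕ) → Finset (Matrix (Fin LT) (Fin s) ℂ))
    (hB0 : (B 0).Nonempty)
    (hBtop : ∀ s, LT < s → B s = ∅)
    (hBortho : ∀ s, ∀ Q ∈ B s, Qᴴ * Q = 1)
    (H : Matrix (Fin LR) (Fin LT) ℂ)
    (t : ℕ) (ht : stilde LR LT P κ B H < t) (hBt : (B t).Nonempty) :
    Iinfo LR LT P B t H - Iinfo LR LT P B (stilde LR LT P κ B H) H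
      < ((t : ℝ) - (stilde LR LT P κ B H : ℝ)) * κ :=
  stilde_marginal_rate_lt_general LR LT P κ B hBtop H t ht hBt
end

section
/- For every real x > 0, (x − 1)/(x + 1) + (1 − ln(1 + x))² > 0. (Elementary inequality used in the proof of Theorem 3.) -/
/-!
Put `1 + x = exp y` with `y > 0`. Since `(x - 1)/(x + 1) = 1 - 2 exp (-y)`, the inequality reads
`2 < (2 - 2y + y²) exp y`, and the cubic Taylor bound `exp y ≥ 1 + y + y²/2 + y³/6` gives
`(2 - 2y + y²) exp y ≥ 2 + y³/3 + y⁴/6 + y⁵/6`.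
-/

open Real Finset

theorem Real.cubic_le_exp_of_nonneg {x : ℝ} (hx : 0 ≤ x) :
    1 + x + x ^ 2 / 2 + x ^ 3 / 6 ≤ exp x := by
  calc 1 + x + x ^ 2 / 2 + x ^ 3 / 6 = ∑ i ∈ range 4, x ^ i / i.factorial := by
        simp only [sum_range_succ, range_one, sum_singleton, Nat.factorial]
        norm_num
    _ ≤ exp x := sum_le_exp_of_nonneg hx 4

theorem Real.two_lt_mul_exp_of_pos {y : ℝ} (hy : 0 < y) : 2 < (2 - 2 * y + y ^ 2) * exp y := by
  have hexp := cubic_le_exp_of_nonneg hy.le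
  have hquad : 0 < 2 - 2 * y + y ^ 2 := by nlinarith [sq_nonneg (y - 1)]
  calc (2 : ℝ) < 2 + y ^ 3 / 3 + y ^ 4 / 6 + y ^ 5 / 6 := by
        have : 0 < y ^ 3 / 3 + y ^ 4 / 6 + y ^ 5 / 6 := by positivity
        linarith
    _ = (2 - 2 * y + y ^ 2) * (1 + y + y ^ 2 / 2 + y ^ 3 / 6) := by ring
    _ ≤ (2 - 2 * y + y ^ 2) * exp y := by gcongr

theorem Real.two_div_lt_one_add_sq_one_sub_log {t : ℝ} (ht : 1 < t) :
    2 / t < 1 + (1 - log t) ^ 2 := by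
  have ht0 : 0 < t := one_pos.trans ht
  have hlog : 0 < log t := log_pos ht
  have key := two_lt_mul_exp_of_pos hlog
  rw [exp_log ht0] at key
  rw [div_lt_iff₀ ht0]
  nlinarith

/-- Elementary inequality used in the proof of Theorem 3: for every `x > 0`,
`(x − 1)/(x + 1) + (1 − ln(1 + x))² > 0`. -/
theorem ineq_for_theorem3 (x : ℝ) (hx : 0 < x) :
    0 < (x - 1) / (x + 1) + (1 - Real.log (1 + x)) ^ 2 := by
  have hbound := two_div_lt_one_add_sq_one_sub_log (lt_add_of_pos_right 1 hx)
  have hrewrite : (x - 1) / (x + 1) = 1 - 2 / (1 + x) := by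
    field_simp
    ring
  rw [hrewrite]
  linarith
end

section
/- Let y ∈ (0,1], set λ⁻ = (1/√y − 1)², λ⁺ = (1/√y + 1)², and define λ(t) = (1/y)·(1 + y − 2√y·cos t) for t ∈ [0,π]. Then for every a ∈ [0,π], ∫_{λ(a)}^{λ⁺} (1/(2πλ))·√((λ⁺ − λ)(λ − λ⁻)) dλ = ∫_a^π f_T(t) dt. In particular (a = 0) the Marchenko–Pastur density (1/(2πλ))·√((λ⁺ − λ)(λ − λ⁻)) on [λ⁻,λ⁺] pushes forward under the substitution λ = λ(t) to the density f_T on [0,π]. (Change-of-variables identity underlying Corollary 1 and equation (5).) -/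
open intervalIntegral Real MeasureTheory Set

noncomputable def mpLambda (y t : ℝ) : ℝ := (1 / y) * (1 + y - 2 * √y * cos t)

noncomputable def mpDensity (y l : ℝ) : ℝ :=
  (1 / (2 * π * l)) * √(((1 / √y + 1) ^ 2 - l) * (l - (1 / √y - 1) ^ 2))

theorem hasDerivAt_mpLambda (y t : ℝ) :
    HasDerivAt (mpLambda y) ((1 / y) * (2 * √y * sin t)) t := by
  refine (((hasDerivAt_cos t).const_mul (2 * √y)).const_sub (1 + y)).const_mul (1 / y)
    |>.congr_deriv ?_
  ring

section

variable {y : ℝ}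

theorem mpLambda_pi (hy : 0 < y) : mpLambda y π = (1 / √y + 1) ^ 2 := by
  have hs : √y ^ 2 = y := sq_sqrt hy.le
  have : √y ≠ 0 := (sqrt_pos.mpr hy).ne'
  simp only [mpLambda, cos_pi]
  field_simp
  linear_combination (1 + 2 * √y) * hs

theorem strictMonoOn_mpLambda (hy : 0 < y) : StrictMonoOn (mpLambda y) (Icc 0 π) := by
  intro s hs t ht hst
  have hcos : cos t < cos s := strictAntiOn_cos hs ht hst
  have hc : 0 < 1 / y * (2 * √y) := by have := sqrt_pos.mpr hy; positivity
  simp only [mpLambda]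
  nlinarith

theorem one_add_sub_mul_cos_pos {t : ℝ} (hy : 0 < y) (ht : cos t < 1) :
    0 < 1 + y - 2 * √y * cos t := by
  have hs : √y ^ 2 = y := sq_sqrt hy.le
  nlinarith [sq_nonneg (1 - √y), mul_pos (sqrt_pos.mpr hy) (sub_pos.mpr ht)]

theorem sub_mpLambda_mul_mpLambda_sub (hy : 0 < y) (t : ℝ) :
    ((1 / √y + 1) ^ 2 - mpLambda y t) * (mpLambda y t - (1 / √y - 1) ^ 2)
      = (2 * sin t / √y) ^ 2 := by
  obtain ⟨s, hs, rfl⟩ : ∃ s, 0 < s ∧ s ^ 2 = y := ⟨√y, sqrt_pos.mpr hy, sq_sqrt hy.le⟩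
  simp only [mpLambda, sqrt_sq hs.le]
  field_simp
  linear_combination (-4 * s ^ 2) * sin_sq_add_cos_sq t

theorem abs_deriv_mul_mpDensity_mpLambda (hy : 0 < y) {t : ℝ}
    (hD : 1 + y - 2 * √y * cos t ≠ 0) :
    |(1 / y) * (2 * √y * sin t)| * mpDensity y (mpLambda y t)
      = 2 * sin t ^ 2 / (π * (1 + y - 2 * √y * cos t)) := by
  have hs : 0 < √y := sqrt_pos.mpr hy
  rw [mpDensity, sub_mpLambda_mul_mpLambda_sub hy, sqrt_sq_eq_abs, mpLambda]
  simp only [abs_mul, abs_div, abs_one, abs_two, abs_of_pos hs, abs_of_pos hy]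
  rw [← sq_abs (sin t)]
  field_simp

theorem fT_eq_two_mul_sin_sq_div (hy : y ≤ 1) {t : ℝ} (hD : 1 + y - 2 * √y * cos t ≠ 0) :
    fT y t = 2 * sin t ^ 2 / (π * (1 + y - 2 * √y * cos t)) := by
  rcases hy.lt_or_eq with hlt | rfl
  · rw [fT, if_pos hlt, cos_two_mul, cos_sq']
    field_simp
    ring
  · have hcos : 1 - cos t ≠ 0 := by
      rw [sqrt_one] at hD
      contrapose! hD
      linarith
    rw [fT, if_neg (lt_irrefl 1), sqrt_one,
      show (1 : ℝ) + 1 - 2 * 1 * cos t = 2 * (1 - cos t) by ring]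
    field_simp
    linear_combination (-1) * sin_sq_add_cos_sq t

end

/-- Change-of-variables identity underlying Corollary 1 and equation (5): for
`y ∈ (0,1]`, with `λ± = (1/√y ± 1)²` and `λ(t) = (1/y)(1 + y − 2√y cos t)`, the
Marchenko–Pastur tail integral `∫_{λ(a)}^{λ⁺} (1/(2πλ))√((λ⁺−λ)(λ−λ⁻)) dλ` equals
`∫_a^π f_T(t) dt` for every `a ∈ [0,π]`. -/
theorem marchenko_pastur_change_of_variables
    (y : ℝ) (hy : y ∈ Set.Ioc (0 : ℝ) 1) (a : ℝ) (ha : a ∈ Set.Icc 0 Real.pi) :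
    (∫ l in ((1 / y) * (1 + y - 2 * Real.sqrt y * Real.cos a))..((1 / Real.sqrt y + 1) ^ 2),
        (1 / (2 * Real.pi * l))
          * Real.sqrt (((1 / Real.sqrt y + 1) ^ 2 - l) * (l - (1 / Real.sqrt y - 1) ^ 2)))
      = ∫ t in a..Real.pi, fT y t := by
  obtain ⟨hy0, hy1⟩ := hy
  have hmono := strictMonoOn_mpLambda hy0
  have hcont : Continuous (mpLambda y) := by unfold mpLambda; fun_prop
  have hImage : mpLambda y '' Ioc a π = Ioc (mpLambda y a) (mpLambda y π) :=
    hcont.continuousOn.image_Ioc_of_strictMonoOn ha.2 (hmono.mono (Icc_subset_Icc_left ha.1))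
  change ∫ l in mpLambda y a..(1 / √y + 1) ^ 2, mpDensity y l = _
  have hle : mpLambda y a ≤ mpLambda y π := hmono.monotoneOn ha ⟨pi_pos.le, le_rfl⟩ ha.2
  rw [← mpLambda_pi hy0, integral_of_le hle, integral_of_le ha.2, ← hImage,
    integral_image_eq_integral_abs_deriv_smul measurableSet_Ioc
      (fun t _ => (hasDerivAt_mpLambda y t).hasDerivWithinAt)
      (hmono.injOn.mono (Ioc_subset_Icc_self.trans (Icc_subset_Icc_left ha.1)))]
  refine setIntegral_congr_fun measurableSet_Ioc fun t ht => ?_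
  have hcos : cos t < 1 := by
    simpa using strictAntiOn_cos ⟨le_rfl, pi_pos.le⟩ ⟨(ha.1.trans_lt ht.1).le, ht.2⟩
      (ha.1.trans_lt ht.1)
  have hD := (one_add_sub_mul_cos_pos hy0 hcos).ne'
  rw [smul_eq_mul, abs_deriv_mul_mpDensity_mpLambda hy0 hD, fT_eq_two_mul_sin_sq_div hy1 hD]
end
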